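/- arXiv:1710.10042 — 7 statements merged into one kernel-verified Lean document; each statement's English description precedes it below -/
import Mathlib

section
/- In the ideal cohesive network, the number of 3-element subsets of V inducing triad type 300 equals C(n₀,3)+C(n₁,3)+C(n₂,3), the number inducing triad type 102 equals Σᵢ C(nᵢ,2)·(n − nᵢ), the number inducing triad type 003 equals n₀·n₁·n₂, and no 3-element subset induces any other triad type. -/
variable {V : Type*}

/-- Dyad `{i, j}` is mutual: both arcs present. -/
def Mutual (A : V → V → Prop) (i j : V) : Prop := A i j ∧ A j i

/-- Dyad `{i, j}` is null: no arc present. -/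
def NullDyad (A : V → V → Prop) (i j : V) : Prop := ¬ A i j ∧ ¬ A j i

/-- Dyad `{i, j}` is asymmetric: exactly one of the two arcs is present. -/
def AsymDyad (A : V → V → Prop) (i j : V) : Prop :=
  (A i j ∧ ¬ A j i) ∨ (¬ A i j ∧ A j i)

/-- Triad type 003: all three dyads null. -/
def Triad003 (A : V → V → Prop) (i j k : V) : Prop :=
  NullDyad A i j ∧ NullDyad A j k ∧ NullDyad A i k

/-- Triad type 300: all three dyads mutual. -/
def Triad300 (A : V → V → Prop) (i j k : V) : Prop :=
  Mutual A i j ∧ Mutual A j k ∧ Mutual A i k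

/-- Triad type 102: one mutual dyad, both remaining dyads null. -/
def Triad102 (A : V → V → Prop) (i j k : V) : Prop :=
  (Mutual A i j ∧ NullDyad A j k ∧ NullDyad A i k) ∨
  (Mutual A j k ∧ NullDyad A i j ∧ NullDyad A i k) ∨
  (Mutual A i k ∧ NullDyad A i j ∧ NullDyad A j k)

/-- Triad type 201: two mutual dyads, the remaining dyad null. -/
def Triad201 (A : V → V → Prop) (i j k : V) : Prop :=
  (Mutual A i j ∧ Mutual A j k ∧ NullDyad A i k) ∨
  (Mutual A i j ∧ Mutual A i k ∧ NullDyad A j k) ∨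
  (Mutual A j k ∧ Mutual A i k ∧ NullDyad A i j)

/-- Triad type 012: exactly one asymmetric dyad, both remaining dyads null. -/
def Triad012 (A : V → V → Prop) (i j k : V) : Prop :=
  (AsymDyad A i j ∧ NullDyad A j k ∧ NullDyad A i k) ∨
  (AsymDyad A j k ∧ NullDyad A i j ∧ NullDyad A i k) ∨
  (AsymDyad A i k ∧ NullDyad A i j ∧ NullDyad A j k)

/-- Two asymmetric arcs `x → z` and `y → z` with common head `z`, dyad `{x, y}` null. -/
def Head021U (A : V → V → Prop) (x y z : V) : Prop :=
  A x z ∧ A y z ∧ ¬ A z x ∧ ¬ A z y ∧ NullDyad A x y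

/-- Triad type 021U: two asymmetric arcs with a common head, remaining dyad null. -/
def Triad021U (A : V → V → Prop) (i j k : V) : Prop :=
  Head021U A i j k ∨ Head021U A i k j ∨ Head021U A j k i

/-- Two asymmetric arcs `z → x` and `z → y` with common tail `z`, dyad `{x, y}` null. -/
def Tail021D (A : V → V → Prop) (x y z : V) : Prop :=
  A z x ∧ A z y ∧ ¬ A x z ∧ ¬ A y z ∧ NullDyad A x y

/-- Triad type 021D: two asymmetric arcs with a common tail, remaining dyad null. -/
def Triad021D (A : V → V → Prop) (i j k : V) : Prop :=
  Tail021D A i j k ∨ Tail021D A i k j ∨ Tail021D A j k i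

/-- A directed path `x → y → z` with all other arcs among the three vertices absent. -/
def Path021C (A : V → V → Prop) (x y z : V) : Prop :=
  A x y ∧ A y z ∧ ¬ A y x ∧ ¬ A z y ∧ NullDyad A x z

/-- Triad type 021C. -/
def Triad021C (A : V → V → Prop) (i j k : V) : Prop :=
  Path021C A i j k ∨ Path021C A i k j ∨ Path021C A j i k ∨
  Path021C A j k i ∨ Path021C A k i j ∨ Path021C A k j i

/-- Mutual dyad `{x, y}` plus asymmetric arcs from each of `x`, `y` to the third vertex `z`. -/
def Up120 (A : V → V → Prop) (x y z : V) : Prop :=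
  Mutual A x y ∧ A x z ∧ A y z ∧ ¬ A z x ∧ ¬ A z y

/-- Triad type 120U. -/
def Triad120U (A : V → V → Prop) (i j k : V) : Prop :=
  Up120 A i j k ∨ Up120 A i k j ∨ Up120 A j k i

/-- Mutual dyad `{x, y}` plus asymmetric arcs from the third vertex `z` to each of `x`, `y`. -/
def Down120 (A : V → V → Prop) (x y z : V) : Prop :=
  Mutual A x y ∧ A z x ∧ A z y ∧ ¬ A x z ∧ ¬ A y z

/-- Triad type 120D. -/
def Triad120D (A : V → V → Prop) (i j k : V) : Prop :=
  Down120 A i j k ∨ Down120 A i k j ∨ Down120 A j k i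

/-- Transitive triple: arcs `x → y`, `y → z`, `x → z`, with no reverse arcs. -/
def Trans030 (A : V → V → Prop) (x y z : V) : Prop :=
  A x y ∧ A y z ∧ A x z ∧ ¬ A y x ∧ ¬ A z y ∧ ¬ A z x

/-- Triad type 030T. -/
def Triad030T (A : V → V → Prop) (i j k : V) : Prop :=
  Trans030 A i j k ∨ Trans030 A i k j ∨ Trans030 A j i k ∨
  Trans030 A j k i ∨ Trans030 A k i j ∨ Trans030 A k j i

/-- Cyclic triple: arcs `x → y`, `y → z`, `z → x`, with no reverse arcs. -/
def Cycle030 (A : V → V → Prop) (x y z : V) : Prop :=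
  A x y ∧ A y z ∧ A z x ∧ ¬ A y x ∧ ¬ A z y ∧ ¬ A x z

/-- Triad type 030C. -/
def Triad030C (A : V → V → Prop) (i j k : V) : Prop :=
  Cycle030 A i j k ∨ Cycle030 A i k j

/-- The 3-element subset `s` induces the triad type `T`. -/
def InducesTriad [DecidableEq V] (T : V → V → V → Prop) (s : Finset V) : Prop :=
  ∃ i j k : V, i ≠ j ∧ i ≠ k ∧ j ≠ k ∧ s = {i, j, k} ∧ T i j k

/-- The ideal cohesive network: an arc from `i` to `j` iff `i ≠ j` and they lie in the
same cluster. -/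
def CohesiveAdj (c : V → Fin 3) (i j : V) : Prop := i ≠ j ∧ c i = c j


section AuxCensus
set_option linter.unusedSectionVars false
variable {V : Type*} [Fintype V] [DecidableEq V] (c : V → Fin 3)

/-- The `t`-th cluster as a finset. -/
def Scl (t : Fin 3) : Finset V := Finset.univ.filter (fun v => c v = t)

variable {c}

lemma mem_Scl {v : V} {t : Fin 3} : v ∈ Scl c t ↔ c v = t := by simp [Scl]

lemma fin3_tri (x : Fin 3) : x = 0 ∨ x = 1 ∨ x = 2 := by omega

lemma triple_card {i j k : V} (hij : i ≠ j) (hik : i ≠ k) (hjk : j ≠ k) :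
    ({i, j, k} : Finset V).card = 3 := by
  rw [Finset.card_insert_of_notMem (by simp [hij, hik]),
    Finset.card_insert_of_notMem (by simp [hjk]), Finset.card_singleton]

lemma mutual_iff' {i j : V} (h : i ≠ j) : Mutual (CohesiveAdj c) i j ↔ c i = c j := by
  constructor
  · rintro ⟨⟨_, h1⟩, _⟩; exact h1
  · intro hc; exact ⟨⟨h, hc⟩, ⟨h.symm, hc.symm⟩⟩

lemma null_iff' {i j : V} (h : i ≠ j) : NullDyad (CohesiveAdj c) i j ↔ c i ≠ c j := by
  constructor
  · rintro ⟨h1, _⟩ hc; exact h1 ⟨h, hc⟩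
  · intro hc; exact ⟨fun e => hc e.2, fun e => hc e.2.symm⟩

lemma triad300_iff' {i j k : V} (hij : i ≠ j) (hik : i ≠ k) (hjk : j ≠ k) :
    Triad300 (CohesiveAdj c) i j k ↔ c i = c j ∧ c j = c k := by
  unfold Triad300
  rw [mutual_iff' hij, mutual_iff' hjk, mutual_iff' hik]
  exact ⟨fun ⟨a, b, _⟩ => ⟨a, b⟩, fun ⟨a, b⟩ => ⟨a, b, a.trans b⟩⟩

lemma triad003_iff' {i j k : V} (hij : i ≠ j) (hik : i ≠ k) (hjk : j ≠ k) :
    Triad003 (CohesiveAdj c) i j k ↔ c i ≠ c j ∧ c j ≠ c k ∧ c i ≠ c k := by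
  unfold Triad003
  rw [null_iff' hij, null_iff' hjk, null_iff' hik]

lemma triad102_iff' {i j k : V} (hij : i ≠ j) (hik : i ≠ k) (hjk : j ≠ k) :
    Triad102 (CohesiveAdj c) i j k ↔
      (c i = c j ∧ c j ≠ c k ∧ c i ≠ c k) ∨
      (c j = c k ∧ c i ≠ c j ∧ c i ≠ c k) ∨
      (c i = c k ∧ c i ≠ c j ∧ c j ≠ c k) := by
  unfold Triad102
  rw [mutual_iff' hij, mutual_iff' hjk, mutual_iff' hik,
    null_iff' hij, null_iff' hjk, null_iff' hik]

/-! ### 300 -/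

lemma induces300_iff {s : Finset V} :
    InducesTriad (Triad300 (CohesiveAdj c)) s ↔
      ∃ t : Fin 3, s ∈ (Scl c t).powersetCard 3 := by
  constructor
  · rintro ⟨i, j, k, hij, hik, hjk, rfl, h⟩
    rw [triad300_iff' hij hik hjk] at h
    refine ⟨c i, Finset.mem_powersetCard.mpr ⟨?_, triple_card hij hik hjk⟩⟩
    intro x hx
    simp only [Finset.mem_insert, Finset.mem_singleton] at hx
    rcases hx with rfl | rfl | rfl
    · exact mem_Scl.mpr rfl
    · exact mem_Scl.mpr h.1.symm
    · exact mem_Scl.mpr (h.1.trans h.2).symm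
  · rintro ⟨t, hs⟩
    rw [Finset.mem_powersetCard] at hs
    obtain ⟨i, j, k, hij, hik, hjk, rfl⟩ := Finset.card_eq_three.mp hs.2
    refine ⟨i, j, k, hij, hik, hjk, rfl, (triad300_iff' hij hik hjk).mpr ?_⟩
    have hi := mem_Scl.mp (hs.1 (by simp : i ∈ ({i,j,k} : Finset V)))
    have hj := mem_Scl.mp (hs.1 (by simp : j ∈ ({i,j,k} : Finset V)))
    have hk := mem_Scl.mp (hs.1 (by simp : k ∈ ({i,j,k} : Finset V)))
    exact ⟨hi.trans hj.symm, hj.trans hk.symm⟩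

lemma F300_disj {t t' : Fin 3} (h : t ≠ t') :
    Disjoint ((Scl c t).powersetCard 3) ((Scl c t').powersetCard 3) := by
  rw [Finset.disjoint_left]
  intro s hs hs'
  rw [Finset.mem_powersetCard] at hs hs'
  obtain ⟨x, hx⟩ := Finset.card_pos.mp (by rw [hs.2]; norm_num)
  exact h ((mem_Scl.mp (hs.1 hx)).symm.trans (mem_Scl.mp (hs'.1 hx)))

lemma count300 :
    {s : Finset V | InducesTriad (Triad300 (CohesiveAdj c)) s}.ncard
      = (Scl c 0).card.choose 3 + (Scl c 1).card.choose 3 + (Scl c 2).card.choose 3 := by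
  have hset : {s : Finset V | InducesTriad (Triad300 (CohesiveAdj c)) s}
      = ↑(((Scl c 0).powersetCard 3 ∪ (Scl c 1).powersetCard 3) ∪ (Scl c 2).powersetCard 3) := by
    ext s
    simp only [Set.mem_setOf_eq, Finset.coe_union, Set.mem_union, Finset.mem_coe,
      induces300_iff]
    constructor
    · rintro ⟨t, ht⟩
      rcases fin3_tri t with rfl | rfl | rfl
      · exact Or.inl (Or.inl ht)
      · exact Or.inl (Or.inr ht)
      · exact Or.inr ht
    · rintro ((h | h) | h)
      exacts [⟨0, h⟩, ⟨1, h⟩, ⟨2, h⟩]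
  rw [hset, Set.ncard_coe_finset,
    Finset.card_union_of_disjoint (by
      rw [Finset.disjoint_union_left]
      exact ⟨F300_disj (by decide), F300_disj (by decide)⟩),
    Finset.card_union_of_disjoint (F300_disj (by decide))]
  simp [Finset.card_powersetCard]
/-! ### 003 -/

variable (c) in
def F003 : Finset (Finset V) :=
  ((Scl c 0) ×ˢ (Scl c 1) ×ˢ (Scl c 2)).image (fun p => {p.1, p.2.1, p.2.2})

lemma mem_F003 {s : Finset V} {a b d : V} (hs : s = {a, b, d})
    (ha : c a = 0) (hb : c b = 1) (hd : c d = 2) : s ∈ F003 c := by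
  refine Finset.mem_image.mpr ⟨(a, b, d), ?_, hs.symm⟩
  simp [Finset.mem_product, mem_Scl, ha, hb, hd]

lemma induces003_iff {s : Finset V} :
    InducesTriad (Triad003 (CohesiveAdj c)) s ↔ s ∈ F003 c := by
  constructor
  · rintro ⟨i, j, k, hij, hik, hjk, rfl, h⟩
    rw [triad003_iff' hij hik hjk] at h
    obtain ⟨h1, h2, h3⟩ := h
    rcases fin3_tri (c i) with e1 | e1 | e1 <;>
      rcases fin3_tri (c j) with e2 | e2 | e2 <;>
      rcases fin3_tri (c k) with e3 | e3 | e3 <;>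
      first
        | exact absurd (e1.trans e2.symm) h1
        | exact absurd (e2.trans e3.symm) h2
        | exact absurd (e1.trans e3.symm) h3
        | exact mem_F003 (by ext x; simp only [Finset.mem_insert, Finset.mem_singleton]; try tauto) e1 e2 e3
        | exact mem_F003 (by ext x; simp only [Finset.mem_insert, Finset.mem_singleton]; try tauto) e1 e3 e2
        | exact mem_F003 (by ext x; simp only [Finset.mem_insert, Finset.mem_singleton]; try tauto) e2 e1 e3
        | exact mem_F003 (by ext x; simp only [Finset.mem_insert, Finset.mem_singleton]; try tauto) e2 e3 e1
        | exact mem_F003 (by ext x; simp only [Finset.mem_insert, Finset.mem_singleton]; try tauto) e3 e1 e2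
        | exact mem_F003 (by ext x; simp only [Finset.mem_insert, Finset.mem_singleton]; try tauto) e3 e2 e1
  · intro hs
    obtain ⟨⟨a, b, d⟩, hm, rfl⟩ := Finset.mem_image.mp hs
    simp only [Finset.mem_product, mem_Scl] at hm
    obtain ⟨ha, hb, hd⟩ := hm
    have hab : a ≠ b := fun h => by rw [h, hb] at ha; exact absurd ha (by decide)
    have had : a ≠ d := fun h => by rw [h, hd] at ha; exact absurd ha (by decide)
    have hbd : b ≠ d := fun h => by rw [h, hd] at hb; exact absurd hb (by decide)
    refine ⟨a, b, d, hab, had, hbd, rfl, (triad003_iff' hab had hbd).mpr ?_⟩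
    rw [ha, hb, hd]
    exact ⟨by decide, by decide, by decide⟩

lemma count003 :
    {s : Finset V | InducesTriad (Triad003 (CohesiveAdj c)) s}.ncard
      = (Scl c 0).card * (Scl c 1).card * (Scl c 2).card := by
  have hset : {s : Finset V | InducesTriad (Triad003 (CohesiveAdj c)) s} = ↑(F003 c) := by
    ext s; simpa using induces003_iff
  rw [hset, Set.ncard_coe_finset]
  unfold F003
  rw [Finset.card_image_of_injOn, Finset.card_product, Finset.card_product, mul_assoc]
  rintro ⟨a, b, d⟩ hm ⟨a', b', d'⟩ hm' he
  simp only [Finset.mem_coe, Finset.mem_product, mem_Scl] at hm hm'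
  obtain ⟨ha, hb, hd⟩ := hm
  obtain ⟨ha', hb', hd'⟩ := hm'
  simp only at he
  have e1 : a = a' := by
    have : a ∈ ({a', b', d'} : Finset V) := he ▸ (by simp)
    simp only [Finset.mem_insert, Finset.mem_singleton] at this
    rcases this with rfl | rfl | rfl
    · rfl
    · rw [hb'] at ha; exact absurd ha (by decide)
    · rw [hd'] at ha; exact absurd ha (by decide)
  have e2 : b = b' := by
    have : b ∈ ({a', b', d'} : Finset V) := he ▸ (by simp)
    simp only [Finset.mem_insert, Finset.mem_singleton] at this
    rcases this with rfl | rfl | rfl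
    · rw [ha'] at hb; exact absurd hb (by decide)
    · rfl
    · rw [hd'] at hb; exact absurd hb (by decide)
  have e3 : d = d' := by
    have : d ∈ ({a', b', d'} : Finset V) := he ▸ (by simp)
    simp only [Finset.mem_insert, Finset.mem_singleton] at this
    rcases this with rfl | rfl | rfl
    · rw [ha'] at hd; exact absurd hd (by decide)
    · rw [hb'] at hd; exact absurd hd (by decide)
    · rfl
  simp [e1, e2, e3]
/-! ### 102 -/

variable (c) in
def F102 (t : Fin 3) : Finset (Finset V) :=
  (((Scl c t).powersetCard 2) ×ˢ ((Scl c t)ᶜ)).image (fun p => insert p.2 p.1)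

lemma mem_F102 {s : Finset V} {a b d : V} (hs : s = {a, b, d}) (hab : a ≠ b)
    (hcab : c a = c b) (hcd : c a ≠ c d) : s ∈ F102 c (c a) := by
  refine Finset.mem_image.mpr ⟨({a, b}, d), ?_, ?_⟩
  · rw [Finset.mem_product]
    refine ⟨Finset.mem_powersetCard.mpr ⟨?_, Finset.card_pair hab⟩, ?_⟩
    · intro x hx
      simp only [Finset.mem_insert, Finset.mem_singleton] at hx
      rcases hx with rfl | rfl
      · exact mem_Scl.mpr rfl
      · exact mem_Scl.mpr hcab.symm
    · rw [Finset.mem_compl, mem_Scl]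
      exact fun h => hcd h.symm
  · rw [hs]; ext x
    simp only [Finset.mem_insert, Finset.mem_singleton]; tauto

lemma induces102_iff {s : Finset V} :
    InducesTriad (Triad102 (CohesiveAdj c)) s ↔ ∃ t : Fin 3, s ∈ F102 c t := by
  constructor
  · rintro ⟨i, j, k, hij, hik, hjk, rfl, h⟩
    rw [triad102_iff' hij hik hjk] at h
    rcases h with ⟨h1, h2, h3⟩ | ⟨h1, h2, h3⟩ | ⟨h1, h2, h3⟩
    · exact ⟨c i, mem_F102 rfl hij h1 h3⟩
    · have e : ({i, j, k} : Finset V) = {j, k, i} := by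
        ext x; simp only [Finset.mem_insert, Finset.mem_singleton]; tauto
      exact ⟨c j, mem_F102 e hjk h1 (Ne.symm h2)⟩
    · have e : ({i, j, k} : Finset V) = {i, k, j} := by
        ext x; simp only [Finset.mem_insert, Finset.mem_singleton]; tauto
      exact ⟨c i, mem_F102 e hik h1 h2⟩
  · rintro ⟨t, hs⟩
    obtain ⟨⟨p, v⟩, hm, rfl⟩ := Finset.mem_image.mp hs
    rw [Finset.mem_product] at hm
    obtain ⟨hp, hv⟩ := hm
    rw [Finset.mem_powersetCard] at hp
    rw [Finset.mem_compl] at hv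
    obtain ⟨a, b, hab, rfl⟩ := Finset.card_eq_two.mp hp.2
    have ha : c a = t := mem_Scl.mp (hp.1 (by simp))
    have hb : c b = t := mem_Scl.mp (hp.1 (by simp))
    have hcv : c v ≠ t := fun h => hv (mem_Scl.mpr h)
    have hav : a ≠ v := fun h => hcv (h ▸ ha)
    have hbv : b ≠ v := fun h => hcv (h ▸ hb)
    refine ⟨a, b, v, hab, hav, hbv, ?_, (triad102_iff' hab hav hbv).mpr ?_⟩
    · ext x; simp only [Finset.mem_insert, Finset.mem_singleton]; tauto
    · exact Or.inl ⟨ha.trans hb.symm, fun h => hcv (h.symm.trans hb),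
        fun h => hcv (h.symm.trans ha)⟩

lemma F102_disj {t t' : Fin 3} (h : t ≠ t') : Disjoint (F102 c t) (F102 c t') := by
  rw [Finset.disjoint_left]
  intro s hs hs'
  obtain ⟨⟨p, v⟩, hm, rfl⟩ := Finset.mem_image.mp hs
  obtain ⟨⟨p', v'⟩, hm', he⟩ := Finset.mem_image.mp hs'
  rw [Finset.mem_product] at hm hm'
  obtain ⟨hp, hv⟩ := hm
  obtain ⟨hp', hv'⟩ := hm'
  rw [Finset.mem_powersetCard] at hp hp'
  have hvp : v ∉ p := fun hx => (Finset.mem_compl.mp hv) (hp.1 hx)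
  have hcard : (insert v p).card = 3 := by
    rw [Finset.card_insert_of_notMem hvp, hp.2]
  have hsub : p ∪ p' ⊆ insert v p := by
    intro x hx
    rcases Finset.mem_union.mp hx with hx | hx
    · exact Finset.mem_insert_of_mem hx
    · exact he ▸ Finset.mem_insert_of_mem hx
  have hdisj : Disjoint p p' := by
    rw [Finset.disjoint_left]
    intro x hx hx'
    exact h ((mem_Scl.mp (hp.1 hx)).symm.trans (mem_Scl.mp (hp'.1 hx')))
  have hle := Finset.card_le_card hsub
  rw [Finset.card_union_of_disjoint hdisj, hp.2, hp'.2, hcard] at hle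
  omega

lemma card_F102 (t : Fin 3) :
    (F102 c t).card = (Scl c t).card.choose 2 * (Fintype.card V - (Scl c t).card) := by
  unfold F102
  rw [Finset.card_image_of_injOn, Finset.card_product, Finset.card_powersetCard,
    Finset.card_compl]
  rintro ⟨p, v⟩ hm ⟨p', v'⟩ hm' he
  simp only [Finset.mem_coe, Finset.mem_product] at hm hm'
  obtain ⟨hp, hv⟩ := hm
  obtain ⟨hp', hv'⟩ := hm'
  rw [Finset.mem_powersetCard] at hp hp'
  rw [Finset.mem_compl] at hv hv'
  simp only at he
  have hvp : v ∉ p := fun hx => hv (hp.1 hx)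
  have hvp' : v' ∉ p' := fun hx => hv' (hp'.1 hx)
  have hvv : v = v' := by
    have : v ∈ insert v' p' := he ▸ Finset.mem_insert_self v p
    rcases Finset.mem_insert.mp this with h | h
    · exact h
    · exact absurd (hp'.1 h) hv
  subst hvv
  have hpp : p = p' := by
    rw [← Finset.erase_insert hvp, ← Finset.erase_insert hvp', he]
  simp [hpp]

lemma count102 :
    {s : Finset V | InducesTriad (Triad102 (CohesiveAdj c)) s}.ncard
      = (Scl c 0).card.choose 2 * (Fintype.card V - (Scl c 0).card)
        + (Scl c 1).card.choose 2 * (Fintype.card V - (Scl c 1).card)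
        + (Scl c 2).card.choose 2 * (Fintype.card V - (Scl c 2).card) := by
  have hset : {s : Finset V | InducesTriad (Triad102 (CohesiveAdj c)) s}
      = ↑((F102 c 0 ∪ F102 c 1) ∪ F102 c 2) := by
    ext s
    simp only [Set.mem_setOf_eq, Finset.coe_union, Set.mem_union, Finset.mem_coe,
      induces102_iff]
    constructor
    · rintro ⟨t, ht⟩
      rcases fin3_tri t with rfl | rfl | rfl
      · exact Or.inl (Or.inl ht)
      · exact Or.inl (Or.inr ht)
      · exact Or.inr ht
    · rintro ((h | h) | h)
      exacts [⟨0, h⟩, ⟨1, h⟩, ⟨2, h⟩]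
  rw [hset, Set.ncard_coe_finset,
    Finset.card_union_of_disjoint (by
      rw [Finset.disjoint_union_left]
      exact ⟨F102_disj (by decide), F102_disj (by decide)⟩),
    Finset.card_union_of_disjoint (F102_disj (by decide)),
    card_F102, card_F102, card_F102]
end AuxCensus

/-- Triad census of the ideal cohesive network. -/
theorem cohesive_triad_census {V : Type*} [Fintype V] [DecidableEq V]
    (c : V → Fin 3) (n₀ n₁ n₂ : ℕ)
    (h₀ : n₀ = (Finset.univ.filter fun v => c v = 0).card)
    (h₁ : n₁ = (Finset.univ.filter fun v => c v = 1).card)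
    (h₂ : n₂ = (Finset.univ.filter fun v => c v = 2).card) :
    {s : Finset V | InducesTriad (Triad300 (CohesiveAdj c)) s}.ncard
        = n₀.choose 3 + n₁.choose 3 + n₂.choose 3 ∧
    {s : Finset V | InducesTriad (Triad102 (CohesiveAdj c)) s}.ncard
        = n₀.choose 2 * (Fintype.card V - n₀) + n₁.choose 2 * (Fintype.card V - n₁) +
            n₂.choose 2 * (Fintype.card V - n₂) ∧
    {s : Finset V | InducesTriad (Triad003 (CohesiveAdj c)) s}.ncard = n₀ * n₁ * n₂ ∧
    (∀ s : Finset V, s.card = 3 →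
        InducesTriad (Triad300 (CohesiveAdj c)) s ∨
        InducesTriad (Triad102 (CohesiveAdj c)) s ∨
        InducesTriad (Triad003 (CohesiveAdj c)) s) := by
  have hS0 : (Scl c 0).card = n₀ := h₀.symm
  have hS1 : (Scl c 1).card = n₁ := h₁.symm
  have hS2 : (Scl c 2).card = n₂ := h₂.symm
  refine ⟨?_, ?_, ?_, ?_⟩
  · rw [count300, hS0, hS1, hS2]
  · rw [count102, hS0, hS1, hS2]
  · rw [count003, hS0, hS1, hS2]
  · intro s hs
    obtain ⟨i, j, k, hij, hik, hjk, rfl⟩ := Finset.card_eq_three.mp hs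
    by_cases e1 : c i = c j <;> by_cases e2 : c j = c k <;> by_cases e3 : c i = c k <;>
      first
        | exact Or.inl ⟨i, j, k, hij, hik, hjk, rfl,
            (triad300_iff' hij hik hjk).mpr ⟨e1, e2⟩⟩
        | exact absurd (e1.symm.trans e3) e2
        | exact absurd (e3.trans e2.symm) e1
        | exact Or.inr (Or.inl ⟨i, j, k, hij, hik, hjk, rfl,
            (triad102_iff' hij hik hjk).mpr (Or.inl ⟨e1, e2, e3⟩)⟩)
        | exact Or.inr (Or.inl ⟨i, j, k, hij, hik, hjk, rfl,
            (triad102_iff' hij hik hjk).mpr (Or.inr (Or.inl ⟨e2, e1, e3⟩))⟩)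
        | exact Or.inr (Or.inl ⟨i, j, k, hij, hik, hjk, rfl,
            (triad102_iff' hij hik hjk).mpr (Or.inr (Or.inr ⟨e3, e1, e2⟩))⟩)
        | exact Or.inr (Or.inr ⟨i, j, k, hij, hik, hjk, rfl,
            (triad003_iff' hij hik hjk).mpr ⟨e1, e2, e3⟩⟩)
end

section
/- In the ideal symmetric core-periphery network, every dyad is mutual or null, and for any three distinct vertices the number of mutual dyads among the three pairs is 0, 2, or 3 (never 1); in particular triad type 102 is forbidden. Moreover, if a ≥ 3 and b ≥ 3, each of the three possibilities occurs, so the triad types occurring are exactly 003, 201 and 300. -/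
variable {V : Type*}

/-- The ideal symmetric core-periphery network (`c v = true` means `v` is a core vertex):
an arc from `i` to `j` iff `i ≠ j` and at least one of them is in the core. -/
def SymCPAdj (c : V → Bool) (i j : V) : Prop := i ≠ j ∧ (c i = true ∨ c j = true)

open Classical in
/-- In the ideal symmetric core-periphery network every dyad is mutual or null, the number
of mutual dyads in any triad is 0, 2 or 3 (never 1), so triad type 102 is forbidden; every
triad is of type 003, 201 or 300, and if the core and the periphery each have at least 3
vertices then each of these three triad types occurs. -/
theorem symCP_dyads_and_triads {V : Type*} [Fintype V] [DecidableEq V]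
    (c : V → Bool) (a b : ℕ)
    (ha : a = (Finset.univ.filter fun v => c v = true).card)
    (hb : b = (Finset.univ.filter fun v => c v = false).card) :
    (∀ i j : V, i ≠ j →
        Mutual (SymCPAdj c) i j ∨ NullDyad (SymCPAdj c) i j) ∧
    (∀ i j k : V, i ≠ j → i ≠ k → j ≠ k →
        ((if Mutual (SymCPAdj c) i j then 1 else 0) +
            (if Mutual (SymCPAdj c) j k then 1 else 0) +
            (if Mutual (SymCPAdj c) i k then 1 else 0) : ℕ) ∈ ({0, 2, 3} : Set ℕ)) ∧
    (∀ i j k : V, i ≠ j → i ≠ k → j ≠ k → ¬ Triad102 (SymCPAdj c) i j k) ∧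
    (∀ i j k : V, i ≠ j → i ≠ k → j ≠ k →
        Triad003 (SymCPAdj c) i j k ∨ Triad201 (SymCPAdj c) i j k ∨
          Triad300 (SymCPAdj c) i j k) ∧
    (3 ≤ a → 3 ≤ b →
        (∃ i j k : V, i ≠ j ∧ i ≠ k ∧ j ≠ k ∧ Triad003 (SymCPAdj c) i j k) ∧
        (∃ i j k : V, i ≠ j ∧ i ≠ k ∧ j ≠ k ∧ Triad201 (SymCPAdj c) i j k) ∧
        (∃ i j k : V, i ≠ j ∧ i ≠ k ∧ j ≠ k ∧ Triad300 (SymCPAdj c) i j k)) := by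
    classical
  have hm : ∀ i j : V, i ≠ j → (c i = true ∨ c j = true) → Mutual (SymCPAdj c) i j := by
    intro i j h hc
    exact ⟨⟨h, hc⟩, ⟨h.symm, hc.symm⟩⟩
  have hn : ∀ i j : V, c i = false → c j = false → NullDyad (SymCPAdj c) i j := by
    intro i j hi hj
    constructor <;> rintro ⟨-, h | h⟩ <;> simp_all
  have hnm : ∀ i j : V, NullDyad (SymCPAdj c) i j → ¬ Mutual (SymCPAdj c) i j :=
    fun i j h hM => h.1 hM.1
  have key : ∀ i j k : V, i ≠ j → i ≠ k → j ≠ k →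
      Triad003 (SymCPAdj c) i j k ∨ Triad201 (SymCPAdj c) i j k ∨
        Triad300 (SymCPAdj c) i j k := by
    intro i j k hij hik hjk
    cases hci : c i <;> cases hcj : c j <;> cases hck : c k
    · exact Or.inl ⟨hn _ _ hci hcj, hn _ _ hcj hck, hn _ _ hci hck⟩
    · exact Or.inr (Or.inl (Or.inr (Or.inr
        ⟨hm _ _ hjk (Or.inr hck), hm _ _ hik (Or.inr hck), hn _ _ hci hcj⟩)))
    · exact Or.inr (Or.inl (Or.inl
        ⟨hm _ _ hij (Or.inr hcj), hm _ _ hjk (Or.inl hcj), hn _ _ hci hck⟩))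
    · exact Or.inr (Or.inr ⟨hm _ _ hij (Or.inr hcj), hm _ _ hjk (Or.inl hcj),
        hm _ _ hik (Or.inr hck)⟩)
    · exact Or.inr (Or.inl (Or.inr (Or.inl
        ⟨hm _ _ hij (Or.inl hci), hm _ _ hik (Or.inl hci), hn _ _ hcj hck⟩)))
    · exact Or.inr (Or.inr ⟨hm _ _ hij (Or.inl hci), hm _ _ hjk (Or.inr hck),
        hm _ _ hik (Or.inl hci)⟩)
    · exact Or.inr (Or.inr ⟨hm _ _ hij (Or.inl hci), hm _ _ hjk (Or.inl hcj),
        hm _ _ hik (Or.inl hci)⟩)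
    · exact Or.inr (Or.inr ⟨hm _ _ hij (Or.inl hci), hm _ _ hjk (Or.inl hcj),
        hm _ _ hik (Or.inl hci)⟩)
  have hcount : ∀ i j k : V, i ≠ j → i ≠ k → j ≠ k →
      ((if Mutual (SymCPAdj c) i j then 1 else 0) +
          (if Mutual (SymCPAdj c) j k then 1 else 0) +
          (if Mutual (SymCPAdj c) i k then 1 else 0) : ℕ) ∈ ({0, 2, 3} : Set ℕ) := by
    intro i j k hij hik hjk
    rcases key i j k hij hik hjk with ⟨h1, h2, h3⟩ |
      (⟨h1, h2, h3⟩ | ⟨h1, h2, h3⟩ | ⟨h1, h2, h3⟩) | ⟨h1, h2, h3⟩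
    · simp [Set.mem_insert_iff, hnm _ _ h1, hnm _ _ h2, hnm _ _ h3]
    · simp [Set.mem_insert_iff, h1, h2, hnm _ _ h3]
    · simp [Set.mem_insert_iff, h1, h2, hnm _ _ h3]
    · simp [Set.mem_insert_iff, h1, h2, hnm _ _ h3]
    · simp [Set.mem_insert_iff, h1, h2, h3]
  refine ⟨?_, hcount, ?_, key, ?_⟩
  · intro i j hij
    cases hci : c i
    · cases hcj : c j
      · exact Or.inr (hn _ _ hci hcj)
      · exact Or.inl (hm _ _ hij (Or.inr hcj))
    · exact Or.inl (hm _ _ hij (Or.inl hci))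
  · intro i j k hij hik hjk h102
    have := hcount i j k hij hik hjk
    rcases h102 with ⟨h1, h2, h3⟩ | ⟨h1, h2, h3⟩ | ⟨h1, h2, h3⟩ <;>
      simp [Set.mem_insert_iff, h1, hnm _ _ h2, hnm _ _ h3] at this
  · intro ha3 hb3
    rw [ha] at ha3; rw [hb] at hb3
    obtain ⟨x, y, z, hx, hy, hz, hxy, hxz, hyz⟩ :=
      Finset.two_lt_card_iff.mp
        (show 2 < (Finset.univ.filter fun v => c v = true).card by omega)
    obtain ⟨p, q, r, hp, hq, hr, hpq, hpr, hqr⟩ :=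
      Finset.two_lt_card_iff.mp
        (show 2 < (Finset.univ.filter fun v => c v = false).card by omega)
    simp only [Finset.mem_filter, Finset.mem_univ, true_and] at hx hy hz hp hq hr
    have hpx : p ≠ x := fun h => by rw [h, hx] at hp; exact Bool.noConfusion hp
    have hqx : q ≠ x := fun h => by rw [h, hx] at hq; exact Bool.noConfusion hq
    refine ⟨⟨p, q, r, hpq, hpr, hqr, hn _ _ hp hq, hn _ _ hq hr, hn _ _ hp hr⟩,
      ⟨p, q, x, hpq, hpx, hqx, Or.inr (Or.inr
        ⟨hm _ _ hqx (Or.inr hx), hm _ _ hpx (Or.inr hx), hn _ _ hp hq⟩)⟩,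
      ⟨x, y, z, hxy, hxz, hyz, hm _ _ hxy (Or.inl hx), hm _ _ hyz (Or.inl hy),
        hm _ _ hxz (Or.inl hx)⟩⟩
end

section
/- In the ideal asymmetric core-periphery network, every triad on three distinct vertices is of one of the following types: 003 (all three peripheral), 021U (two peripheral vertices each sending an arc to one core vertex, the peripheral pair being null), 120D (a mutual core dyad with the peripheral third vertex sending an arc to each of its members), or 300 (three core vertices, all dyads mutual); and if a ≥ 3 and b ≥ 3, all four types occur. -/
variable {V : Type*}

/-- The ideal asymmetric core-periphery network (`c v = true` means `v` is a core vertex):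
an arc from `i` to `j` iff `i ≠ j` and `j` is in the core. -/
def AsymCPAdj (c : V → Bool) (i j : V) : Prop := i ≠ j ∧ c j = true

/-! Since `i → j` is an arc exactly when `i ≠ j` and `j` is in the core, the triad on three
distinct vertices depends only on how many of them lie in the core: none, one, two or three core
vertices give 003, 021U, 120D and 300 respectively. -/

theorem Finset.exists_three_distinct_of_three_le_card_filter [Fintype V] {p : V → Prop}
    [DecidablePred p] (h : 3 ≤ (Finset.univ.filter p).card) :
    ∃ x y z, x ≠ y ∧ x ≠ z ∧ y ≠ z ∧ p x ∧ p y ∧ p z := by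
  obtain ⟨x, y, z, hx, hy, hz, hxy, hxz, hyz⟩ := Finset.two_lt_card_iff.mp h
  simp only [Finset.mem_filter, Finset.mem_univ, true_and] at hx hy hz
  exact ⟨x, y, z, hxy, hxz, hyz, hx, hy, hz⟩

namespace AsymCPAdj

variable {c : V → Bool}

theorem ne_of_core_of_periphery {x y : V} (hx : c x = true) (hy : c y = false) : x ≠ y :=
  ne_of_apply_ne c (by simp [hx, hy])

theorem triad003_of_periphery {i j k : V} (hi : c i = false) (hj : c j = false)
    (hk : c k = false) : Triad003 (AsymCPAdj c) i j k := by
  simp [Triad003, NullDyad, AsymCPAdj, hi, hj, hk]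

theorem head021U_of_periphery_of_core {x y z : V} (hx : c x = false) (hy : c y = false)
    (hz : c z = true) : Head021U (AsymCPAdj c) x y z := by
  simp [Head021U, NullDyad, AsymCPAdj, hx, hy, hz, (ne_of_core_of_periphery hz hx).symm,
    (ne_of_core_of_periphery hz hy).symm]

theorem down120_of_core_of_periphery {x y z : V} (hxy : x ≠ y) (hx : c x = true)
    (hy : c y = true) (hz : c z = false) : Down120 (AsymCPAdj c) x y z := by
  simp [Down120, Mutual, AsymCPAdj, hx, hy, hz, hxy, hxy.symm,
    (ne_of_core_of_periphery hx hz).symm, (ne_of_core_of_periphery hy hz).symm]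

theorem triad300_of_core {i j k : V} (hij : i ≠ j) (hik : i ≠ k) (hjk : j ≠ k)
    (hi : c i = true) (hj : c j = true) (hk : c k = true) : Triad300 (AsymCPAdj c) i j k := by
  simp [Triad300, Mutual, AsymCPAdj, hi, hj, hk, hij, hik, hjk, hij.symm, hik.symm, hjk.symm]

theorem triad003_or_triad021U_or_triad120D_or_triad300 {i j k : V} (hij : i ≠ j) (hik : i ≠ k)
    (hjk : j ≠ k) :
    Triad003 (AsymCPAdj c) i j k ∨ Triad021U (AsymCPAdj c) i j k ∨
      Triad120D (AsymCPAdj c) i j k ∨ Triad300 (AsymCPAdj c) i j k := by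
  cases hi : c i <;> cases hj : c j <;> cases hk : c k
  · exact .inl (triad003_of_periphery hi hj hk)
  · exact .inr <| .inl <| .inl (head021U_of_periphery_of_core hi hj hk)
  · exact .inr <| .inl <| .inr <| .inl (head021U_of_periphery_of_core hi hk hj)
  · exact .inr <| .inr <| .inl <| .inr <| .inr (down120_of_core_of_periphery hjk hj hk hi)
  · exact .inr <| .inl <| .inr <| .inr (head021U_of_periphery_of_core hj hk hi)
  · exact .inr <| .inr <| .inl <| .inr <| .inl (down120_of_core_of_periphery hik hi hk hj)
  · exact .inr <| .inr <| .inl <| .inl (down120_of_core_of_periphery hij hi hj hk)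
  · exact .inr <| .inr <| .inr (triad300_of_core hij hik hjk hi hj hk)

end AsymCPAdj

open AsymCPAdj in
theorem asymCP_triads_general {V : Type*} [Fintype V]
    (c : V → Bool) (a b : ℕ)
    (ha : a = (Finset.univ.filter fun v => c v = true).card)
    (hb : b = (Finset.univ.filter fun v => c v = false).card) :
    (∀ i j k : V, i ≠ j → i ≠ k → j ≠ k →
        Triad003 (AsymCPAdj c) i j k ∨ Triad021U (AsymCPAdj c) i j k ∨
          Triad120D (AsymCPAdj c) i j k ∨ Triad300 (AsymCPAdj c) i j k) ∧
    (3 ≤ a → 3 ≤ b →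
        (∃ i j k : V, i ≠ j ∧ i ≠ k ∧ j ≠ k ∧ Triad003 (AsymCPAdj c) i j k) ∧
        (∃ i j k : V, i ≠ j ∧ i ≠ k ∧ j ≠ k ∧ Triad021U (AsymCPAdj c) i j k) ∧
        (∃ i j k : V, i ≠ j ∧ i ≠ k ∧ j ≠ k ∧ Triad120D (AsymCPAdj c) i j k) ∧
        (∃ i j k : V, i ≠ j ∧ i ≠ k ∧ j ≠ k ∧ Triad300 (AsymCPAdj c) i j k)) := by
  refine ⟨fun i j k => triad003_or_triad021U_or_triad120D_or_triad300, fun ha3 hb3 => ?_⟩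
  obtain ⟨x, y, z, hxy, hxz, hyz, hx, hy, hz⟩ :=
    Finset.exists_three_distinct_of_three_le_card_filter (ha ▸ ha3)
  obtain ⟨p, q, r, hpq, hpr, hqr, hp, hq, hr⟩ :=
    Finset.exists_three_distinct_of_three_le_card_filter (hb ▸ hb3)
  have hpx : p ≠ x := (ne_of_core_of_periphery hx hp).symm
  have hqx : q ≠ x := (ne_of_core_of_periphery hx hq).symm
  have hxp : x ≠ p := ne_of_core_of_periphery hx hp
  have hyp : y ≠ p := ne_of_core_of_periphery hy hp
  exact ⟨⟨p, q, r, hpq, hpr, hqr, triad003_of_periphery hp hq hr⟩,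
    ⟨p, q, x, hpq, hpx, hqx, .inl (head021U_of_periphery_of_core hp hq hx)⟩,
    ⟨x, y, p, hxy, hxp, hyp, .inl (down120_of_core_of_periphery hxy hx hy hp)⟩,
    ⟨x, y, z, hxy, hxz, hyz, triad300_of_core hxy hxz hyz hx hy hz⟩⟩

/-- In the ideal asymmetric core-periphery network every triad is of type 003, 021U, 120D
or 300, and if the core and the periphery each have at least 3 vertices then all four
types occur. -/
theorem asymCP_triads {V : Type*} [Fintype V] [DecidableEq V]
    (c : V → Bool) (a b : ℕ)
    (ha : a = (Finset.univ.filter fun v => c v = true).card)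
    (hb : b = (Finset.univ.filter fun v => c v = false).card) :
    (∀ i j k : V, i ≠ j → i ≠ k → j ≠ k →
        Triad003 (AsymCPAdj c) i j k ∨ Triad021U (AsymCPAdj c) i j k ∨
          Triad120D (AsymCPAdj c) i j k ∨ Triad300 (AsymCPAdj c) i j k) ∧
    (3 ≤ a → 3 ≤ b →
        (∃ i j k : V, i ≠ j ∧ i ≠ k ∧ j ≠ k ∧ Triad003 (AsymCPAdj c) i j k) ∧
        (∃ i j k : V, i ≠ j ∧ i ≠ k ∧ j ≠ k ∧ Triad021U (AsymCPAdj c) i j k) ∧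
        (∃ i j k : V, i ≠ j ∧ i ≠ k ∧ j ≠ k ∧ Triad120D (AsymCPAdj c) i j k) ∧
        (∃ i j k : V, i ≠ j ∧ i ≠ k ∧ j ≠ k ∧ Triad300 (AsymCPAdj c) i j k)) :=
  asymCP_triads_general c a b ha hb
end

section
/- In the ideal hierarchical network without complete diagonal blocks, triad type 012 is forbidden: if there is an arc from i to j and k is a vertex distinct from both i and j, then at least one arc exists between k and one of i, j; consequently no three distinct vertices span exactly one arc. -/
variable {V : Type*}

/-- The ideal hierarchical network without complete blocks on the diagonal:
an arc from `i` to `j` iff the level of `j` is the level of `i` plus one. -/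
def HierAdj (c : V → Fin 3) (i j : V) : Prop := (c j : ℕ) = (c i : ℕ) + 1

private lemma hier_key {V : Type*} (c : V → Fin 3) (i j k : V) (h : HierAdj c i j) :
    HierAdj c k i ∨ HierAdj c i k ∨ HierAdj c k j ∨ HierAdj c j k := by
  unfold HierAdj at *
  have hi := (c i).isLt
  have hj := (c j).isLt
  have hk := (c k).isLt
  omega

/-- In the ideal hierarchical network without complete diagonal blocks the triad type 012
is forbidden: if there is an arc from `i` to `j` and `k` is distinct from both, then some
arc exists between `k` and one of `i`, `j`; consequently no three distinct vertices span
exactly one arc. -/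
theorem hier_012_forbidden {V : Type*} [Fintype V] [DecidableEq V] (c : V → Fin 3) :
    (∀ i j k : V, HierAdj c i j → k ≠ i → k ≠ j →
        HierAdj c k i ∨ HierAdj c i k ∨ HierAdj c k j ∨ HierAdj c j k) ∧
    (∀ i j k : V, i ≠ j → i ≠ k → j ≠ k → ¬ Triad012 (HierAdj c) i j k) := by
  refine ⟨fun i j k h _ _ => hier_key c i j k h, fun i j k _ _ _ hT => ?_⟩
  rcases hT with ⟨hA, ⟨n1, n2⟩, ⟨n3, n4⟩⟩ | ⟨hA, ⟨n1, n2⟩, ⟨n3, n4⟩⟩ | ⟨hA, ⟨n1, n2⟩, ⟨n3, n4⟩⟩ <;>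
    rcases hA with ⟨h, _⟩ | ⟨_, h⟩
  · rcases hier_key c i j k h with h' | h' | h' | h' <;> tauto
  · rcases hier_key c j i k h with h' | h' | h' | h' <;> tauto
  · rcases hier_key c j k i h with h' | h' | h' | h' <;> tauto
  · rcases hier_key c k j i h with h' | h' | h' | h' <;> tauto
  · rcases hier_key c i k j h with h' | h' | h' | h' <;> tauto
  · rcases hier_key c k i j h with h' | h' | h' | h' <;> tauto
end

section
/- In the ideal hierarchical network without complete diagonal blocks, the number of 3-element subsets of V inducing triad type 021C equals n₀·n₁·n₂; the number inducing 021U equals C(n₀,2)·n₁ + C(n₁,2)·n₂; the number inducing 021D equals n₀·C(n₁,2) + n₁·C(n₂,2); the number inducing 003 equals C(n₀,3)+C(n₁,3)+C(n₂,3)+C(n₀,2)·n₂+n₀·C(n₂,2); and no 3-element subset induces any other triad type. -/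
variable {V : Type*}

/-! Since `HierAdj c x y` depends only on the levels `c x` and `c y`, the triad type induced
on three distinct vertices is determined by the multiset `{c x, c y, c z}` of their levels,
and a finite check over the ten such multisets on `Fin 3` tells which multisets give which
type (and that every multiset gives one of 021C, 021U, 021D, 003). Splitting a subset into
its level classes, the subsets whose level multiset is `m` number `∏ₐ C(nₐ, count a m)`;
summing over the multisets of each type gives the census. -/

open Finset

section LevelMultiset

variable {α : Type*} [DecidableEq V]

theorem map_val_triple (c : V → α) {x y z : V} (hxy : x ≠ y) (hxz : x ≠ z) (hyz : y ≠ z) :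
    ({x, y, z} : Finset V).val.map c = {c x, c y, c z} := by
  simp [hxy, hxz, hyz]

theorem inducesTriad_iff_map_val_mem {T : V → V → V → Prop} (c : V → α)
    (P : Finset (Multiset α)) (hP : ∀ m ∈ P, Multiset.card m = 3)
    (hT : ∀ x y z, T x y z ↔ {c x, c y, c z} ∈ P) (s : Finset V) :
    InducesTriad T s ↔ s.val.map c ∈ P := by
  constructor
  · rintro ⟨x, y, z, hxy, hxz, hyz, rfl, hxyz⟩
    rwa [map_val_triple c hxy hxz hyz, ← hT]
  · intro hs
    have hcard : s.card = 3 := by simpa using hP _ hs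
    obtain ⟨x, y, z, hxy, hxz, hyz, rfl⟩ := card_eq_three.mp hcard
    rw [map_val_triple c hxy hxz hyz, ← hT] at hs
    exact ⟨x, y, z, hxy, hxz, hyz, rfl, hs⟩

variable [DecidableEq α] [Fintype α]

theorem filter_biUnion_eq_of_forall_mem {c : V → α} {t : α → Finset V}
    (ht : ∀ a, ∀ v ∈ t a, c v = a) (a : α) :
    {v ∈ univ.biUnion t | c v = a} = t a := by
  ext v
  simp only [mem_filter, mem_biUnion, mem_univ, true_and]
  constructor
  · rintro ⟨⟨b, hv⟩, rfl⟩
    rwa [ht b v hv]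
  · exact fun hv => ⟨⟨a, hv⟩, ht a v hv⟩

variable [Fintype V]

theorem card_filter_map_val_eq (c : V → α) (m : Multiset α) :
    #{s : Finset V | s.val.map c = m} = ∏ a, (#{v | c v = a}).choose (m.count a) := by
  have hprofile (s : Finset V) : s.val.map c = m ↔ ∀ a, #{v ∈ s | c v = a} = m.count a := by
    simp [Multiset.ext, Multiset.count_map, card_def, filter_val, eq_comm]
  simp_rw [← card_powersetCard, ← Fintype.card_piFinset]
  refine card_nbij' (fun s a => {v ∈ s | c v = a}) (fun t => univ.biUnion t) ?_ ?_ ?_ ?_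
  · intro s hs
    simp only [coe_filter, mem_univ, true_and, Set.mem_ofPred_eq, hprofile,
      Fintype.coe_piFinset, Set.mem_pi, Set.mem_univ, mem_coe, mem_powersetCard] at hs ⊢
    exact fun a _ => ⟨filter_subset_filter _ (subset_univ s), hs a⟩
  · intro t ht
    simp only [Fintype.coe_piFinset, Set.mem_pi, Set.mem_univ, mem_coe, mem_powersetCard,
      forall_const] at ht
    have hlevel : ∀ a, ∀ v ∈ t a, c v = a := fun a v hv => (mem_filter.mp ((ht a).1 hv)).2
    simp only [coe_filter, mem_univ, true_and, Set.mem_ofPred_eq, hprofile,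
      filter_biUnion_eq_of_forall_mem hlevel]
    exact fun a => (ht a).2
  · intro s _
    ext v
    simp
  · intro t ht
    simp only [Fintype.coe_piFinset, Set.mem_pi, Set.mem_univ, mem_coe, mem_powersetCard,
      forall_const] at ht
    exact funext (filter_biUnion_eq_of_forall_mem fun a v hv => (mem_filter.mp ((ht a).1 hv)).2)

theorem card_filter_map_val_mem (c : V → α) (P : Finset (Multiset α)) :
    #{s : Finset V | s.val.map c ∈ P} =
      ∑ m ∈ P, ∏ a, (#{v | c v = a}).choose (m.count a) := by
  refine (card_eq_sum_card_fiberwise fun s hs => (mem_filter.mp hs).2).trans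
    (sum_congr rfl fun m hm => ?_)
  rw [filter_filter, ← card_filter_map_val_eq]
  congr 1
  exact filter_congr fun s _ => and_iff_right_of_imp fun h => h ▸ hm

theorem ncard_inducesTriad_eq_sum {T : V → V → V → Prop} (c : V → α)
    (P : Finset (Multiset α)) (hP : ∀ m ∈ P, Multiset.card m = 3)
    (hT : ∀ x y z, T x y z ↔ {c x, c y, c z} ∈ P) :
    {s : Finset V | InducesTriad T s}.ncard =
      ∑ m ∈ P, ∏ a, (#{v | c v = a}).choose (m.count a) := by
  have hset :
      {s : Finset V | InducesTriad T s} = ↑({s : Finset V | s.val.map c ∈ P} : Finset _) := by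
    ext s
    simp [inducesTriad_iff_map_val_mem c P hP hT s]
  rw [hset, Set.ncard_coe_finset, card_filter_map_val_mem]

end LevelMultiset

section HierAdj

theorem triad021C_hierAdj_iff (c : V → Fin 3) (x y z : V) :
    Triad021C (HierAdj c) x y z ↔
      ({c x, c y, c z} : Multiset (Fin 3)) ∈ ({{0, 1, 2}} : Finset _) := by
  unfold Triad021C Path021C NullDyad HierAdj
  generalize c x = a, c y = b, c z = d
  revert a b d
  decide

theorem triad021U_hierAdj_iff (c : V → Fin 3) (x y z : V) :
    Triad021U (HierAdj c) x y z ↔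
      ({c x, c y, c z} : Multiset (Fin 3)) ∈ ({{0, 0, 1}, {1, 1, 2}} : Finset _) := by
  unfold Triad021U Head021U NullDyad HierAdj
  generalize c x = a, c y = b, c z = d
  revert a b d
  decide

theorem triad021D_hierAdj_iff (c : V → Fin 3) (x y z : V) :
    Triad021D (HierAdj c) x y z ↔
      ({c x, c y, c z} : Multiset (Fin 3)) ∈ ({{0, 1, 1}, {1, 2, 2}} : Finset _) := by
  unfold Triad021D Tail021D NullDyad HierAdj
  generalize c x = a, c y = b, c z = d
  revert a b d
  decide

theorem triad003_hierAdj_iff (c : V → Fin 3) (x y z : V) :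
    Triad003 (HierAdj c) x y z ↔ ({c x, c y, c z} : Multiset (Fin 3)) ∈
      ({{0, 0, 0}, {1, 1, 1}, {2, 2, 2}, {0, 0, 2}, {0, 2, 2}} : Finset _) := by
  unfold Triad003 NullDyad HierAdj
  generalize c x = a, c y = b, c z = d
  revert a b d
  decide

theorem hierAdj_triad_cases (c : V → Fin 3) (x y z : V) :
    Triad021C (HierAdj c) x y z ∨ Triad021U (HierAdj c) x y z ∨
      Triad021D (HierAdj c) x y z ∨ Triad003 (HierAdj c) x y z := by
  rw [triad021C_hierAdj_iff, triad021U_hierAdj_iff, triad021D_hierAdj_iff, triad003_hierAdj_iff]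
  generalize c x = a, c y = b, c z = d
  revert a b d
  decide

end HierAdj

/-- Triad census of the ideal hierarchical network without complete diagonal blocks. -/
theorem hier_triad_census {V : Type*} [Fintype V] [DecidableEq V]
    (c : V → Fin 3) (n₀ n₁ n₂ : ℕ)
    (h₀ : n₀ = (Finset.univ.filter fun v => c v = 0).card)
    (h₁ : n₁ = (Finset.univ.filter fun v => c v = 1).card)
    (h₂ : n₂ = (Finset.univ.filter fun v => c v = 2).card) :
    {s : Finset V | InducesTriad (Triad021C (HierAdj c)) s}.ncard = n₀ * n₁ * n₂ ∧
    {s : Finset V | InducesTriad (Triad021U (HierAdj c)) s}.ncard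
        = n₀.choose 2 * n₁ + n₁.choose 2 * n₂ ∧
    {s : Finset V | InducesTriad (Triad021D (HierAdj c)) s}.ncard
        = n₀ * n₁.choose 2 + n₁ * n₂.choose 2 ∧
    {s : Finset V | InducesTriad (Triad003 (HierAdj c)) s}.ncard
        = n₀.choose 3 + n₁.choose 3 + n₂.choose 3 + n₀.choose 2 * n₂ + n₀ * n₂.choose 2 ∧
    (∀ s : Finset V, s.card = 3 →
        InducesTriad (Triad021C (HierAdj c)) s ∨
        InducesTriad (Triad021U (HierAdj c)) s ∨
        InducesTriad (Triad021D (HierAdj c)) s ∨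
        InducesTriad (Triad003 (HierAdj c)) s) := by
  subst h₀ h₁ h₂
  refine ⟨?_, ?_, ?_, ?_, ?_⟩
  · rw [ncard_inducesTriad_eq_sum c _ (by decide) (triad021C_hierAdj_iff c)]
    simp +decide [Fin.prod_univ_three, mul_assoc]
  · rw [ncard_inducesTriad_eq_sum c _ (by decide) (triad021U_hierAdj_iff c)]
    simp +decide [Fin.prod_univ_three]
  · rw [ncard_inducesTriad_eq_sum c _ (by decide) (triad021D_hierAdj_iff c)]
    simp +decide [Fin.prod_univ_three]
  · rw [ncard_inducesTriad_eq_sum c _ (by decide) (triad003_hierAdj_iff c)]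
    simp +decide [Fin.prod_univ_three, add_assoc]
  · intro s hs
    obtain ⟨x, y, z, hxy, hxz, hyz, rfl⟩ := card_eq_three.mp hs
    have induces {T : V → V → V → Prop} (h : T x y z) : InducesTriad T {x, y, z} :=
      ⟨x, y, z, hxy, hxz, hyz, rfl, h⟩
    exact (hierAdj_triad_cases c x y z).imp induces (Or.imp induces (Or.imp induces induces))
end

section
/- In the ideal hierarchical network with complete diagonal blocks, the number of 3-element subsets of V inducing triad type 300 equals C(n₀,3)+C(n₁,3)+C(n₂,3); the number inducing 021C equals n₀·n₁·n₂; the number inducing 102 equals C(n₀,2)·n₂ + n₀·C(n₂,2); the number inducing 120U equals C(n₀,2)·n₁ + C(n₁,2)·n₂; the number inducing 120D equals n₀·C(n₁,2) + n₁·C(n₂,2); and no 3-element subset induces any other triad type. -/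
variable {V : Type*}

/-- The ideal hierarchical network with complete blocks on the diagonal:
an arc from `i` to `j` iff `i ≠ j` and either they share the same level or
the level of `j` is the level of `i` plus one. -/
def HierDiagAdj (c : V → Fin 3) (i j : V) : Prop :=
  i ≠ j ∧ (c i = c j ∨ (c j : ℕ) = (c i : ℕ) + 1)

/-! ### Auxiliary development for the census -/

section CensusAux

/-- Adjacency on levels: same level or one level up. -/
def adj3 (a b : Fin 3) : Prop := a = b ∨ (b : ℕ) = (a : ℕ) + 1

/-- The multiset `{a, b, d}` equals the multiset `{x, y, z}`. -/
def pat (x y z a b d : Fin 3) : Prop :=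
  (a = x ∧ b = y ∧ d = z) ∨ (a = x ∧ b = z ∧ d = y) ∨ (a = y ∧ b = x ∧ d = z) ∨
  (a = y ∧ b = z ∧ d = x) ∨ (a = z ∧ b = x ∧ d = y) ∨ (a = z ∧ b = y ∧ d = x)

instance (a b : Fin 3) : Decidable (adj3 a b) := by unfold adj3; infer_instance
instance (a b : Fin 3) : Decidable (Mutual adj3 a b) := by unfold Mutual; infer_instance
instance (a b : Fin 3) : Decidable (NullDyad adj3 a b) := by unfold NullDyad; infer_instance
instance (a b d : Fin 3) : Decidable (Triad300 adj3 a b d) := by unfold Triad300; infer_instance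
instance (a b d : Fin 3) : Decidable (Path021C adj3 a b d) := by unfold Path021C; infer_instance
instance (a b d : Fin 3) : Decidable (Triad021C adj3 a b d) := by unfold Triad021C; infer_instance
instance (a b d : Fin 3) : Decidable (Triad102 adj3 a b d) := by unfold Triad102; infer_instance
instance (a b d : Fin 3) : Decidable (Up120 adj3 a b d) := by unfold Up120; infer_instance
instance (a b d : Fin 3) : Decidable (Triad120U adj3 a b d) := by unfold Triad120U; infer_instance
instance (a b d : Fin 3) : Decidable (Down120 adj3 a b d) := by unfold Down120; infer_instance
instance (a b d : Fin 3) : Decidable (Triad120D adj3 a b d) := by unfold Triad120D; infer_instance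
instance (x y z a b d : Fin 3) : Decidable (pat x y z a b d) := by unfold pat; infer_instance

lemma hier_iff {c : V → Fin 3} {i j : V} (h : i ≠ j) :
    HierDiagAdj c i j ↔ adj3 (c i) (c j) := by
  simp [HierDiagAdj, adj3, h]

lemma t300 {c : V → Fin 3} {i j k : V} (hij : i ≠ j) (hik : i ≠ k) (hjk : j ≠ k) :
    Triad300 (HierDiagAdj c) i j k ↔ Triad300 adj3 (c i) (c j) (c k) := by
  simp only [Triad300, Mutual, hier_iff hij, hier_iff hij.symm, hier_iff hik,
    hier_iff hik.symm, hier_iff hjk, hier_iff hjk.symm]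

lemma t021C {c : V → Fin 3} {i j k : V} (hij : i ≠ j) (hik : i ≠ k) (hjk : j ≠ k) :
    Triad021C (HierDiagAdj c) i j k ↔ Triad021C adj3 (c i) (c j) (c k) := by
  simp only [Triad021C, Path021C, NullDyad, hier_iff hij, hier_iff hij.symm, hier_iff hik,
    hier_iff hik.symm, hier_iff hjk, hier_iff hjk.symm]

lemma t102 {c : V → Fin 3} {i j k : V} (hij : i ≠ j) (hik : i ≠ k) (hjk : j ≠ k) :
    Triad102 (HierDiagAdj c) i j k ↔ Triad102 adj3 (c i) (c j) (c k) := by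
  simp only [Triad102, Mutual, NullDyad, hier_iff hij, hier_iff hij.symm, hier_iff hik,
    hier_iff hik.symm, hier_iff hjk, hier_iff hjk.symm]

lemma t120U {c : V → Fin 3} {i j k : V} (hij : i ≠ j) (hik : i ≠ k) (hjk : j ≠ k) :
    Triad120U (HierDiagAdj c) i j k ↔ Triad120U adj3 (c i) (c j) (c k) := by
  simp only [Triad120U, Up120, Mutual, hier_iff hij, hier_iff hij.symm, hier_iff hik,
    hier_iff hik.symm, hier_iff hjk, hier_iff hjk.symm]

lemma t120D {c : V → Fin 3} {i j k : V} (hij : i ≠ j) (hik : i ≠ k) (hjk : j ≠ k) :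
    Triad120D (HierDiagAdj c) i j k ↔ Triad120D adj3 (c i) (c j) (c k) := by
  simp only [Triad120D, Down120, Mutual, hier_iff hij, hier_iff hij.symm, hier_iff hik,
    hier_iff hik.symm, hier_iff hjk, hier_iff hjk.symm]

lemma d300 : ∀ a b d : Fin 3, Triad300 adj3 a b d ↔ (a = b ∧ b = d) := by decide
lemma d021C : ∀ a b d : Fin 3, Triad021C adj3 a b d ↔ pat 0 1 2 a b d := by decide
lemma d102 : ∀ a b d : Fin 3,
    Triad102 adj3 a b d ↔ (pat 0 0 2 a b d ∨ pat 0 2 2 a b d) := by decide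
lemma d120U : ∀ a b d : Fin 3,
    Triad120U adj3 a b d ↔ (pat 0 0 1 a b d ∨ pat 1 1 2 a b d) := by decide
lemma d120D : ∀ a b d : Fin 3,
    Triad120D adj3 a b d ↔ (pat 0 1 1 a b d ∨ pat 1 2 2 a b d) := by decide
lemma dAll : ∀ a b d : Fin 3, Triad300 adj3 a b d ∨ Triad021C adj3 a b d ∨
    Triad102 adj3 a b d ∨ Triad120U adj3 a b d ∨ Triad120D adj3 a b d := by decide

end CensusAux

section CensusFinsets

variable [Fintype V] [DecidableEq V]

def F3 (c : V → Fin 3) (a : Fin 3) : Finset (Finset V) :=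
  (Finset.univ.filter fun v => c v = a).powersetCard 3

def F21 (c : V → Fin 3) (a b : Fin 3) : Finset (Finset V) :=
  (((Finset.univ.filter fun v => c v = a).powersetCard 2) ×ˢ
    (Finset.univ.filter fun v => c v = b)).image fun p => insert p.2 p.1

def F111 (c : V → Fin 3) : Finset (Finset V) :=
  ((Finset.univ.filter fun v => c v = 0) ×ˢ
    ((Finset.univ.filter fun v => c v = 1) ×ˢ (Finset.univ.filter fun v => c v = 2))).image
    fun t => {t.1, t.2.1, t.2.2}

lemma mem_F3 {c : V → Fin 3} {a : Fin 3} {s : Finset V} :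
    s ∈ F3 c a ↔ (∀ v ∈ s, c v = a) ∧ s.card = 3 := by
  simp [F3, Finset.mem_powersetCard, Finset.subset_iff]

lemma mem_F21 {c : V → Fin 3} {a b : Fin 3} {s : Finset V} :
    s ∈ F21 c a b ↔ ∃ x y z : V, x ≠ y ∧ c x = a ∧ c y = a ∧ c z = b ∧ s = {z, x, y} := by
  constructor
  · intro hs
    obtain ⟨⟨p, z⟩, hmem, rfl⟩ := Finset.mem_image.1 hs
    obtain ⟨hp, hz⟩ := Finset.mem_product.1 hmem
    obtain ⟨hsub, hcard⟩ := Finset.mem_powersetCard.1 hp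
    obtain ⟨x, y, hxy, rfl⟩ := Finset.card_eq_two.1 hcard
    have hx := hsub (Finset.mem_insert_self x {y})
    have hy := hsub (by simp : y ∈ ({x, y} : Finset V))
    simp only [Finset.mem_filter] at hx hy hz
    exact ⟨x, y, z, hxy, hx.2, hy.2, hz.2, rfl⟩
  · rintro ⟨x, y, z, hxy, hx, hy, hz, rfl⟩
    refine Finset.mem_image.2 ⟨({x, y}, z), Finset.mem_product.2 ⟨?_, by simp [hz]⟩, rfl⟩
    refine Finset.mem_powersetCard.2 ⟨?_, ?_⟩
    · intro v hv
      simp only [Finset.mem_insert, Finset.mem_singleton] at hv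
      rcases hv with rfl | rfl <;> simp [hx, hy]
    · rw [Finset.card_insert_of_notMem (by simp [hxy]), Finset.card_singleton]

lemma tri_mem_F21 {c : V → Fin 3} {a b : Fin 3} {x y z : V} (hxy : x ≠ y) (hx : c x = a)
    (hy : c y = a) (hz : c z = b) {s : Finset V} (hs : s = {z, x, y}) : s ∈ F21 c a b :=
  mem_F21.2 ⟨x, y, z, hxy, hx, hy, hz, hs⟩

lemma mem_F111 {c : V → Fin 3} {s : Finset V} :
    s ∈ F111 c ↔ ∃ x y z : V, c x = 0 ∧ c y = 1 ∧ c z = 2 ∧ s = {x, y, z} := by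
  simp only [F111, Finset.mem_image, Finset.mem_product, Finset.mem_filter, Finset.mem_univ,
    true_and, Prod.exists]
  constructor
  · rintro ⟨x, y, z, ⟨hx, hy, hz⟩, rfl⟩; exact ⟨x, y, z, hx, hy, hz, rfl⟩
  · rintro ⟨x, y, z, hx, hy, hz, rfl⟩; exact ⟨x, y, z, ⟨hx, hy, hz⟩, rfl⟩

lemma card_F3 (c : V → Fin 3) (a : Fin 3) :
    (F3 c a).card = ((Finset.univ.filter fun v => c v = a).card).choose 3 :=
  Finset.card_powersetCard 3 _

lemma card_F21 (c : V → Fin 3) {a b : Fin 3} (hab : a ≠ b) :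
    (F21 c a b).card = ((Finset.univ.filter fun v => c v = a).card).choose 2 *
      (Finset.univ.filter fun v => c v = b).card := by
  have hinj : Set.InjOn (fun p : Finset V × V => insert p.2 p.1)
      ↑(((Finset.univ.filter fun v => c v = a).powersetCard 2) ×ˢ
        (Finset.univ.filter fun v => c v = b)) := by
    rintro ⟨p, z⟩ hp ⟨q, w⟩ hq h
    simp only [Finset.coe_product, Set.mem_prod, Finset.mem_coe, Finset.mem_powersetCard,
      Finset.mem_filter] at hp hq
    obtain ⟨⟨hpsub, _⟩, _, hz⟩ := hp
    obtain ⟨⟨hqsub, _⟩, _, hw⟩ := hq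
    have hpa : ∀ v ∈ p, c v = a := fun v hv => (Finset.mem_filter.1 (hpsub hv)).2
    have hqa : ∀ v ∈ q, c v = a := fun v hv => (Finset.mem_filter.1 (hqsub hv)).2
    simp only at h
    have hzw : z = w := by
      have hmem : z ∈ insert w q := by rw [← h]; exact Finset.mem_insert_self _ _
      rcases Finset.mem_insert.1 hmem with h' | h'
      · exact h'
      · have := hqa z h'
        rw [hz] at this
        exact absurd this (Ne.symm hab)
    have hpq : p = q := by
      have e1 : (insert z p).filter (fun v => c v = a) = p := by
        rw [Finset.filter_insert, if_neg (by rw [hz]; exact Ne.symm hab),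
          Finset.filter_true_of_mem hpa]
      have e2 : (insert w q).filter (fun v => c v = a) = q := by
        rw [Finset.filter_insert, if_neg (by rw [hw]; exact Ne.symm hab),
          Finset.filter_true_of_mem hqa]
      rw [← e1, ← e2, h]
    rw [Prod.ext_iff]
    exact ⟨hpq, hzw⟩
  rw [F21, Finset.card_image_of_injOn hinj, Finset.card_product, Finset.card_powersetCard]

lemma card_F111 (c : V → Fin 3) :
    (F111 c).card = (Finset.univ.filter fun v => c v = 0).card *
      ((Finset.univ.filter fun v => c v = 1).card *
        (Finset.univ.filter fun v => c v = 2).card) := by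
  have hinj : Set.InjOn (fun t : V × V × V => ({t.1, t.2.1, t.2.2} : Finset V))
      ↑((Finset.univ.filter fun v => c v = 0) ×ˢ
        ((Finset.univ.filter fun v => c v = 1) ×ˢ (Finset.univ.filter fun v => c v = 2))) := by
    rintro ⟨x, y, z⟩ h1 ⟨x', y', z'⟩ h2 h
    simp only [Finset.coe_product, Set.mem_prod, Finset.mem_coe, Finset.mem_filter,
      Finset.mem_univ, true_and] at h1 h2
    obtain ⟨hx, hy, hz⟩ := h1
    obtain ⟨hx', hy', hz'⟩ := h2
    simp only at h
    have hxx : x = x' := by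
      have : x ∈ ({x', y', z'} : Finset V) := by rw [← h]; simp
      simp only [Finset.mem_insert, Finset.mem_singleton] at this
      rcases this with rfl | rfl | rfl
      · rfl
      · rw [hy'] at hx; exact absurd hx (by decide)
      · rw [hz'] at hx; exact absurd hx (by decide)
    have hyy : y = y' := by
      have : y ∈ ({x', y', z'} : Finset V) := by rw [← h]; simp
      simp only [Finset.mem_insert, Finset.mem_singleton] at this
      rcases this with rfl | rfl | rfl
      · rw [hx'] at hy; exact absurd hy (by decide)
      · rfl
      · rw [hz'] at hy; exact absurd hy (by decide)
    have hzz : z = z' := by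
      have : z ∈ ({x', y', z'} : Finset V) := by rw [← h]; simp
      simp only [Finset.mem_insert, Finset.mem_singleton] at this
      rcases this with rfl | rfl | rfl
      · rw [hx'] at hz; exact absurd hz (by decide)
      · rw [hy'] at hz; exact absurd hz (by decide)
      · rfl
    rw [Prod.ext_iff, Prod.ext_iff]
    exact ⟨hxx, hyy, hzz⟩
  rw [F111, Finset.card_image_of_injOn hinj, Finset.card_product, Finset.card_product]

lemma card_filter_triple (p : V → Prop) [DecidablePred p] {x y z : V}
    (hxy : x ≠ y) (hxz : x ≠ z) (hyz : y ≠ z) :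
    (({x, y, z} : Finset V).filter p).card =
      (if p x then 1 else 0) + ((if p y then 1 else 0) + (if p z then 1 else 0)) := by
  rw [Finset.card_filter]
  rw [show ({x, y, z} : Finset V) = insert x (insert y {z}) from rfl]
  rw [Finset.sum_insert (by simp [hxy, hxz]), Finset.sum_insert (by simp [hyz]),
    Finset.sum_singleton]

lemma count_F3 {c : V → Fin 3} {a : Fin 3} {s : Finset V} (hs : s ∈ F3 c a) (e : Fin 3) :
    (s.filter fun v => c v = e).card = if a = e then 3 else 0 := by
  obtain ⟨hall, hcard⟩ := mem_F3.1 hs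
  by_cases h : a = e
  · rw [if_pos h, Finset.filter_true_of_mem (fun v hv => h ▸ hall v hv), hcard]
  · rw [if_neg h, Finset.card_eq_zero, Finset.filter_eq_empty_iff]
    intro v hv he
    rw [hall v hv] at he
    exact h he

lemma count_F21 {c : V → Fin 3} {a b : Fin 3} (hab : a ≠ b) {s : Finset V}
    (hs : s ∈ F21 c a b) (e : Fin 3) :
    (s.filter fun v => c v = e).card =
      (if a = e then 2 else 0) + (if b = e then 1 else 0) := by
  obtain ⟨x, y, z, hxy, hx, hy, hz, rfl⟩ := mem_F21.1 hs
  have hzx : z ≠ x := fun h => hab (by rw [← hx, ← h, hz])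
  have hzy : z ≠ y := fun h => hab (by rw [← hy, ← h, hz])
  rw [card_filter_triple _ hzx hzy hxy]
  simp only [hx, hy, hz]
  split_ifs <;> omega

lemma count_F111 {c : V → Fin 3} {s : Finset V} (hs : s ∈ F111 c) (e : Fin 3) :
    (s.filter fun v => c v = e).card = 1 := by
  obtain ⟨x, y, z, hx, hy, hz, rfl⟩ := mem_F111.1 hs
  have hxy : x ≠ y := fun h => by rw [h, hy] at hx; exact absurd hx (by decide)
  have hxz : x ≠ z := fun h => by rw [h, hz] at hx; exact absurd hx (by decide)
  have hyz : y ≠ z := fun h => by rw [h, hz] at hy; exact absurd hy (by decide)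
  rw [card_filter_triple _ hxy hxz hyz]
  simp only [hx, hy, hz]
  fin_cases e <;> decide

lemma F3_disj {c : V → Fin 3} {a a' : Fin 3} (h : a ≠ a') : Disjoint (F3 c a) (F3 c a') := by
  rw [Finset.disjoint_left]
  intro s h1 h2
  have c1 := count_F3 h1 a
  have c2 := count_F3 h2 a
  rw [if_pos rfl] at c1
  rw [if_neg (Ne.symm h)] at c2
  omega

end CensusFinsets

section CensusSets

variable [Fintype V] [DecidableEq V]

lemma fin3_cases : ∀ a : Fin 3, a = 0 ∨ a = 1 ∨ a = 2 := by decide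

lemma set300 (c : V → Fin 3) :
    {s : Finset V | InducesTriad (Triad300 (HierDiagAdj c)) s} = ↑(F3 c 0 ∪ F3 c 1 ∪ F3 c 2) := by
  ext s
  simp only [Set.mem_setOf_eq, Finset.coe_union, Set.mem_union, Finset.mem_coe]
  constructor
  · rintro ⟨i, j, k, hij, hik, hjk, rfl, ht⟩
    have h := (d300 _ _ _).1 ((t300 hij hik hjk).1 ht)
    have hmem : ({i, j, k} : Finset V) ∈ F3 c (c i) := by
      refine mem_F3.2 ⟨?_, Finset.card_eq_three.2 ⟨i, j, k, hij, hik, hjk, rfl⟩⟩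
      intro v hv
      simp only [Finset.mem_insert, Finset.mem_singleton] at hv
      rcases hv with rfl | rfl | rfl
      · rfl
      · exact h.1.symm
      · exact (h.1.trans h.2).symm
    rcases fin3_cases (c i) with h' | h' | h' <;> rw [h'] at hmem
    · exact Or.inl (Or.inl hmem)
    · exact Or.inl (Or.inr hmem)
    · exact Or.inr hmem
  · have key : ∀ a : Fin 3, s ∈ F3 c a → InducesTriad (Triad300 (HierDiagAdj c)) s := by
      intro a hs
      obtain ⟨hall, hcard⟩ := mem_F3.1 hs
      obtain ⟨i, j, k, hij, hik, hjk, rfl⟩ := Finset.card_eq_three.1 hcard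
      refine ⟨i, j, k, hij, hik, hjk, rfl, (t300 hij hik hjk).2 ((d300 _ _ _).2 ?_)⟩
      rw [hall i (by simp), hall j (by simp), hall k (by simp)]
      exact ⟨rfl, rfl⟩
    rintro ((hs | hs) | hs)
    · exact key 0 hs
    · exact key 1 hs
    · exact key 2 hs

lemma set021C (c : V → Fin 3) :
    {s : Finset V | InducesTriad (Triad021C (HierDiagAdj c)) s} = ↑(F111 c) := by
  ext s
  simp only [Set.mem_setOf_eq, Finset.mem_coe]
  constructor
  · rintro ⟨i, j, k, hij, hik, hjk, rfl, ht⟩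
    have h := (d021C _ _ _).1 ((t021C hij hik hjk).1 ht)
    unfold pat at h
    rcases h with ⟨h1, h2, h3⟩ | ⟨h1, h2, h3⟩ | ⟨h1, h2, h3⟩ | ⟨h1, h2, h3⟩ | ⟨h1, h2, h3⟩ |
      ⟨h1, h2, h3⟩
    · exact mem_F111.2 ⟨i, j, k, h1, h2, h3, rfl⟩
    · exact mem_F111.2 ⟨i, k, j, h1, h3, h2, by ext v; simp; tauto⟩
    · exact mem_F111.2 ⟨j, i, k, h2, h1, h3, by ext v; simp; tauto⟩
    · exact mem_F111.2 ⟨k, i, j, h3, h1, h2, by ext v; simp; tauto⟩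
    · exact mem_F111.2 ⟨j, k, i, h2, h3, h1, by ext v; simp; tauto⟩
    · exact mem_F111.2 ⟨k, j, i, h3, h2, h1, by ext v; simp; tauto⟩
  · intro hs
    obtain ⟨x, y, z, hx, hy, hz, rfl⟩ := mem_F111.1 hs
    have hxy : x ≠ y := fun h => by rw [h, hy] at hx; exact absurd hx (by decide)
    have hxz : x ≠ z := fun h => by rw [h, hz] at hx; exact absurd hx (by decide)
    have hyz : y ≠ z := fun h => by rw [h, hz] at hy; exact absurd hy (by decide)
    refine ⟨x, y, z, hxy, hxz, hyz, rfl, (t021C hxy hxz hyz).2 ?_⟩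
    rw [hx, hy, hz]
    decide

lemma key102 {c : V → Fin 3} {s : Finset V} (a b : Fin 3) (hab : a ≠ b)
    (htr : Triad102 adj3 b a a) (hs : s ∈ F21 c a b) :
    InducesTriad (Triad102 (HierDiagAdj c)) s := by
  obtain ⟨x, y, z, hxy, hx, hy, hz, rfl⟩ := mem_F21.1 hs
  have hzx : z ≠ x := fun h => by rw [h, hx] at hz; exact hab hz
  have hzy : z ≠ y := fun h => by rw [h, hy] at hz; exact hab hz
  refine ⟨z, x, y, hzx, hzy, hxy, rfl, (t102 hzx hzy hxy).2 ?_⟩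
  rw [hz, hx, hy]
  exact htr

lemma key120U {c : V → Fin 3} {s : Finset V} (a b : Fin 3) (hab : a ≠ b)
    (htr : Triad120U adj3 b a a) (hs : s ∈ F21 c a b) :
    InducesTriad (Triad120U (HierDiagAdj c)) s := by
  obtain ⟨x, y, z, hxy, hx, hy, hz, rfl⟩ := mem_F21.1 hs
  have hzx : z ≠ x := fun h => by rw [h, hx] at hz; exact hab hz
  have hzy : z ≠ y := fun h => by rw [h, hy] at hz; exact hab hz
  refine ⟨z, x, y, hzx, hzy, hxy, rfl, (t120U hzx hzy hxy).2 ?_⟩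
  rw [hz, hx, hy]
  exact htr

lemma key120D {c : V → Fin 3} {s : Finset V} (a b : Fin 3) (hab : a ≠ b)
    (htr : Triad120D adj3 b a a) (hs : s ∈ F21 c a b) :
    InducesTriad (Triad120D (HierDiagAdj c)) s := by
  obtain ⟨x, y, z, hxy, hx, hy, hz, rfl⟩ := mem_F21.1 hs
  have hzx : z ≠ x := fun h => by rw [h, hx] at hz; exact hab hz
  have hzy : z ≠ y := fun h => by rw [h, hy] at hz; exact hab hz
  refine ⟨z, x, y, hzx, hzy, hxy, rfl, (t120D hzx hzy hxy).2 ?_⟩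
  rw [hz, hx, hy]
  exact htr

lemma set102 (c : V → Fin 3) :
    {s : Finset V | InducesTriad (Triad102 (HierDiagAdj c)) s} =
      ↑(F21 c 0 2 ∪ F21 c 2 0) := by
  ext s
  simp only [Set.mem_setOf_eq, Finset.coe_union, Set.mem_union, Finset.mem_coe]
  constructor
  · rintro ⟨i, j, k, hij, hik, hjk, rfl, ht⟩
    have h := (d102 _ _ _).1 ((t102 hij hik hjk).1 ht)
    unfold pat at h
    rcases h with (⟨h1, h2, h3⟩ | ⟨h1, h2, h3⟩ | ⟨h1, h2, h3⟩ | ⟨h1, h2, h3⟩ | ⟨h1, h2, h3⟩ |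
      ⟨h1, h2, h3⟩) | (⟨h1, h2, h3⟩ | ⟨h1, h2, h3⟩ | ⟨h1, h2, h3⟩ | ⟨h1, h2, h3⟩ | ⟨h1, h2, h3⟩ |
      ⟨h1, h2, h3⟩)
    · exact Or.inl (tri_mem_F21 hij h1 h2 h3 (by ext v; simp; tauto))
    · exact Or.inl (tri_mem_F21 hik h1 h3 h2 (by ext v; simp; tauto))
    · exact Or.inl (tri_mem_F21 hij h1 h2 h3 (by ext v; simp; tauto))
    · exact Or.inl (tri_mem_F21 hik h1 h3 h2 (by ext v; simp; tauto))
    · exact Or.inl (tri_mem_F21 hjk h2 h3 h1 rfl)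
    · exact Or.inl (tri_mem_F21 hjk h2 h3 h1 rfl)
    · exact Or.inr (tri_mem_F21 hjk h2 h3 h1 rfl)
    · exact Or.inr (tri_mem_F21 hjk h2 h3 h1 rfl)
    · exact Or.inr (tri_mem_F21 hik h1 h3 h2 (by ext v; simp; tauto))
    · exact Or.inr (tri_mem_F21 hij h1 h2 h3 (by ext v; simp; tauto))
    · exact Or.inr (tri_mem_F21 hik h1 h3 h2 (by ext v; simp; tauto))
    · exact Or.inr (tri_mem_F21 hij h1 h2 h3 (by ext v; simp; tauto))
  · rintro (hs | hs)
    · exact key102 0 2 (by decide) (by decide) hs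
    · exact key102 2 0 (by decide) (by decide) hs

lemma set120U (c : V → Fin 3) :
    {s : Finset V | InducesTriad (Triad120U (HierDiagAdj c)) s} =
      ↑(F21 c 0 1 ∪ F21 c 1 2) := by
  ext s
  simp only [Set.mem_setOf_eq, Finset.coe_union, Set.mem_union, Finset.mem_coe]
  constructor
  · rintro ⟨i, j, k, hij, hik, hjk, rfl, ht⟩
    have h := (d120U _ _ _).1 ((t120U hij hik hjk).1 ht)
    unfold pat at h
    rcases h with (⟨h1, h2, h3⟩ | ⟨h1, h2, h3⟩ | ⟨h1, h2, h3⟩ | ⟨h1, h2, h3⟩ | ⟨h1, h2, h3⟩ |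
      ⟨h1, h2, h3⟩) | (⟨h1, h2, h3⟩ | ⟨h1, h2, h3⟩ | ⟨h1, h2, h3⟩ | ⟨h1, h2, h3⟩ | ⟨h1, h2, h3⟩ |
      ⟨h1, h2, h3⟩)
    · exact Or.inl (tri_mem_F21 hij h1 h2 h3 (by ext v; simp; tauto))
    · exact Or.inl (tri_mem_F21 hik h1 h3 h2 (by ext v; simp; tauto))
    · exact Or.inl (tri_mem_F21 hij h1 h2 h3 (by ext v; simp; tauto))
    · exact Or.inl (tri_mem_F21 hik h1 h3 h2 (by ext v; simp; tauto))
    · exact Or.inl (tri_mem_F21 hjk h2 h3 h1 rfl)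
    · exact Or.inl (tri_mem_F21 hjk h2 h3 h1 rfl)
    · exact Or.inr (tri_mem_F21 hij h1 h2 h3 (by ext v; simp; tauto))
    · exact Or.inr (tri_mem_F21 hik h1 h3 h2 (by ext v; simp; tauto))
    · exact Or.inr (tri_mem_F21 hij h1 h2 h3 (by ext v; simp; tauto))
    · exact Or.inr (tri_mem_F21 hik h1 h3 h2 (by ext v; simp; tauto))
    · exact Or.inr (tri_mem_F21 hjk h2 h3 h1 rfl)
    · exact Or.inr (tri_mem_F21 hjk h2 h3 h1 rfl)
  · rintro (hs | hs)
    · exact key120U 0 1 (by decide) (by decide) hs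
    · exact key120U 1 2 (by decide) (by decide) hs

lemma set120D (c : V → Fin 3) :
    {s : Finset V | InducesTriad (Triad120D (HierDiagAdj c)) s} =
      ↑(F21 c 1 0 ∪ F21 c 2 1) := by
  ext s
  simp only [Set.mem_setOf_eq, Finset.coe_union, Set.mem_union, Finset.mem_coe]
  constructor
  · rintro ⟨i, j, k, hij, hik, hjk, rfl, ht⟩
    have h := (d120D _ _ _).1 ((t120D hij hik hjk).1 ht)
    unfold pat at h
    rcases h with (⟨h1, h2, h3⟩ | ⟨h1, h2, h3⟩ | ⟨h1, h2, h3⟩ | ⟨h1, h2, h3⟩ | ⟨h1, h2, h3⟩ |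
      ⟨h1, h2, h3⟩) | (⟨h1, h2, h3⟩ | ⟨h1, h2, h3⟩ | ⟨h1, h2, h3⟩ | ⟨h1, h2, h3⟩ | ⟨h1, h2, h3⟩ |
      ⟨h1, h2, h3⟩)
    · exact Or.inl (tri_mem_F21 hjk h2 h3 h1 rfl)
    · exact Or.inl (tri_mem_F21 hjk h2 h3 h1 rfl)
    · exact Or.inl (tri_mem_F21 hik h1 h3 h2 (by ext v; simp; tauto))
    · exact Or.inl (tri_mem_F21 hij h1 h2 h3 (by ext v; simp; tauto))
    · exact Or.inl (tri_mem_F21 hik h1 h3 h2 (by ext v; simp; tauto))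
    · exact Or.inl (tri_mem_F21 hij h1 h2 h3 (by ext v; simp; tauto))
    · exact Or.inr (tri_mem_F21 hjk h2 h3 h1 rfl)
    · exact Or.inr (tri_mem_F21 hjk h2 h3 h1 rfl)
    · exact Or.inr (tri_mem_F21 hik h1 h3 h2 (by ext v; simp; tauto))
    · exact Or.inr (tri_mem_F21 hij h1 h2 h3 (by ext v; simp; tauto))
    · exact Or.inr (tri_mem_F21 hik h1 h3 h2 (by ext v; simp; tauto))
    · exact Or.inr (tri_mem_F21 hij h1 h2 h3 (by ext v; simp; tauto))
  · rintro (hs | hs)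
    · exact key120D 1 0 (by decide) (by decide) hs
    · exact key120D 2 1 (by decide) (by decide) hs

end CensusSets

/-- Triad census of the ideal hierarchical network with complete diagonal blocks. -/
theorem hierDiag_triad_census {V : Type*} [Fintype V] [DecidableEq V]
    (c : V → Fin 3) (n₀ n₁ n₂ : ℕ)
    (h₀ : n₀ = (Finset.univ.filter fun v => c v = 0).card)
    (h₁ : n₁ = (Finset.univ.filter fun v => c v = 1).card)
    (h₂ : n₂ = (Finset.univ.filter fun v => c v = 2).card) :
    {s : Finset V | InducesTriad (Triad300 (HierDiagAdj c)) s}.ncard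
        = n₀.choose 3 + n₁.choose 3 + n₂.choose 3 ∧
    {s : Finset V | InducesTriad (Triad021C (HierDiagAdj c)) s}.ncard = n₀ * n₁ * n₂ ∧
    {s : Finset V | InducesTriad (Triad102 (HierDiagAdj c)) s}.ncard
        = n₀.choose 2 * n₂ + n₀ * n₂.choose 2 ∧
    {s : Finset V | InducesTriad (Triad120U (HierDiagAdj c)) s}.ncard
        = n₀.choose 2 * n₁ + n₁.choose 2 * n₂ ∧
    {s : Finset V | InducesTriad (Triad120D (HierDiagAdj c)) s}.ncard
        = n₀ * n₁.choose 2 + n₁ * n₂.choose 2 ∧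
    (∀ s : Finset V, s.card = 3 →
        InducesTriad (Triad300 (HierDiagAdj c)) s ∨
        InducesTriad (Triad021C (HierDiagAdj c)) s ∨
        InducesTriad (Triad102 (HierDiagAdj c)) s ∨
        InducesTriad (Triad120U (HierDiagAdj c)) s ∨
        InducesTriad (Triad120D (HierDiagAdj c)) s) := by
  subst h₀ h₁ h₂
  refine ⟨?_, ?_, ?_, ?_, ?_, ?_⟩
  · rw [set300, Set.ncard_coe_finset,
      Finset.card_union_of_disjoint (Finset.disjoint_union_left.2
        ⟨F3_disj (by decide), F3_disj (by decide)⟩),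
      Finset.card_union_of_disjoint (F3_disj (by decide)), card_F3, card_F3, card_F3]
  · rw [set021C, Set.ncard_coe_finset, card_F111]
    exact (mul_assoc _ _ _).symm
  · have hd : Disjoint (F21 c 0 2) (F21 c 2 0) := by
      rw [Finset.disjoint_left]
      intro s h1 h2
      have c1 := count_F21 (show (0 : Fin 3) ≠ 2 by decide) h1 0
      have c2 := count_F21 (show (2 : Fin 3) ≠ 0 by decide) h2 0
      simp [-Finset.card_eq_zero] at c1 c2
      omega
    rw [set102, Set.ncard_coe_finset, Finset.card_union_of_disjoint hd,
      card_F21 c (by decide), card_F21 c (by decide)]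
    ring
  · have hd : Disjoint (F21 c 0 1) (F21 c 1 2) := by
      rw [Finset.disjoint_left]
      intro s h1 h2
      have c1 := count_F21 (show (0 : Fin 3) ≠ 1 by decide) h1 0
      have c2 := count_F21 (show (1 : Fin 3) ≠ 2 by decide) h2 0
      simp [-Finset.card_eq_zero] at c1 c2
      omega
    rw [set120U, Set.ncard_coe_finset, Finset.card_union_of_disjoint hd,
      card_F21 c (by decide), card_F21 c (by decide)]
  · have hd : Disjoint (F21 c 1 0) (F21 c 2 1) := by
      rw [Finset.disjoint_left]
      intro s h1 h2
      have c1 := count_F21 (show (1 : Fin 3) ≠ 0 by decide) h1 0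
      have c2 := count_F21 (show (2 : Fin 3) ≠ 1 by decide) h2 0
      simp [-Finset.card_eq_zero] at c1 c2
      omega
    rw [set120D, Set.ncard_coe_finset, Finset.card_union_of_disjoint hd,
      card_F21 c (by decide), card_F21 c (by decide)]
    ring
  · intro s hcard
    obtain ⟨i, j, k, hij, hik, hjk, rfl⟩ := Finset.card_eq_three.1 hcard
    rcases dAll (c i) (c j) (c k) with h | h | h | h | h
    · exact Or.inl ⟨i, j, k, hij, hik, hjk, rfl, (t300 hij hik hjk).2 h⟩
    · exact Or.inr (Or.inl ⟨i, j, k, hij, hik, hjk, rfl, (t021C hij hik hjk).2 h⟩)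
    · exact Or.inr (Or.inr (Or.inl ⟨i, j, k, hij, hik, hjk, rfl, (t102 hij hik hjk).2 h⟩))
    · exact Or.inr (Or.inr (Or.inr (Or.inl ⟨i, j, k, hij, hik, hjk, rfl,
        (t120U hij hik hjk).2 h⟩)))
    · exact Or.inr (Or.inr (Or.inr (Or.inr ⟨i, j, k, hij, hik, hjk, rfl,
        (t120D hij hik hjk).2 h⟩)))
end

section
/- The ideal transitivity network with complete diagonal blocks is semicomplete: no dyad is null (for all distinct i, j there is an arc from i to j or from j to i). Every triad on three distinct vertices is of one of the types 300, 120U, 120D or 030T, and if each of the three levels contains at least 3 vertices, all four types occur. -/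
variable {V : Type*}

/-- The ideal transitivity network with complete blocks on the diagonal:
an arc from `i` to `j` iff `i ≠ j` and the level of `i` is at most the level of `j`. -/
def TransDiagAdj (c : V → Fin 3) (i j : V) : Prop :=
  i ≠ j ∧ (c i : ℕ) ≤ (c j : ℕ)

private lemma tdt_ex3 {W : Type*} [DecidableEq W] {s : Finset W} (h : 3 ≤ s.card) :
    ∃ a ∈ s, ∃ b ∈ s, ∃ d ∈ s, a ≠ b ∧ a ≠ d ∧ b ≠ d := by
  obtain ⟨a, ha⟩ := Finset.card_pos.mp (show 0 < s.card by omega)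
  have h2 : 2 ≤ (s.erase a).card := by rw [Finset.card_erase_of_mem ha]; omega
  obtain ⟨b, hb⟩ := Finset.card_pos.mp (show 0 < (s.erase a).card by omega)
  have h3 : 1 ≤ ((s.erase a).erase b).card := by
    rw [Finset.card_erase_of_mem hb]; omega
  obtain ⟨d, hd⟩ := Finset.card_pos.mp (show 0 < ((s.erase a).erase b).card by omega)
  refine ⟨a, ha, b, (Finset.mem_erase.mp hb).2, d,
    Finset.mem_of_mem_erase (Finset.mem_of_mem_erase hd), ?_, ?_, ?_⟩
  · exact fun e => (Finset.mem_erase.mp hb).1 e.symm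
  · exact fun e => (Finset.mem_erase.mp (Finset.mem_of_mem_erase hd)).1 e.symm
  · exact fun e => (Finset.mem_erase.mp hd).1 e.symm

private lemma tdt_arc (c : V → Fin 3) {x y : V} (h : x ≠ y) (h' : (c x : ℕ) ≤ c y) :
    TransDiagAdj c x y := ⟨h, h'⟩

private lemma tdt_narc (c : V → Fin 3) {x y : V} (h : (c y : ℕ) < c x) :
    ¬ TransDiagAdj c x y := fun h' => absurd h'.2 (not_le.mpr h)

private lemma tdt_mut (c : V → Fin 3) {x y : V} (h : x ≠ y) (h' : (c x : ℕ) = c y) :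
    Mutual (TransDiagAdj c) x y := ⟨⟨h, h'.le⟩, ⟨h.symm, h'.ge⟩⟩

/-- The four-way disjunction goal. -/
private def TdtQuad (A : V → V → Prop) (i j k : V) : Prop :=
  Triad300 A i j k ∨ Triad120U A i j k ∨ Triad120D A i j k ∨ Triad030T A i j k

private lemma tdt_mut_symm {A : V → V → Prop} {i j : V} (h : Mutual A i j) :
    Mutual A j i := ⟨h.2, h.1⟩

private lemma tdt_up_symm {A : V → V → Prop} {x y z : V} (h : Up120 A x y z) :
    Up120 A y x z := ⟨tdt_mut_symm h.1, h.2.2.1, h.2.1, h.2.2.2.2, h.2.2.2.1⟩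

private lemma tdt_down_symm {A : V → V → Prop} {x y z : V} (h : Down120 A x y z) :
    Down120 A y x z := ⟨tdt_mut_symm h.1, h.2.2.1, h.2.1, h.2.2.2.2, h.2.2.2.1⟩

private lemma tdt_swap12 {A : V → V → Prop} {i j k : V} (h : TdtQuad A i j k) :
    TdtQuad A j i k := by
  rcases h with h | h | h | h
  · exact Or.inl ⟨tdt_mut_symm h.1, h.2.2, h.2.1⟩
  · rcases h with u | u | u
    · exact Or.inr (Or.inl (Or.inl (tdt_up_symm u)))
    · exact Or.inr (Or.inl (Or.inr (Or.inr u)))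
    · exact Or.inr (Or.inl (Or.inr (Or.inl u)))
  · rcases h with u | u | u
    · exact Or.inr (Or.inr (Or.inl (Or.inl (tdt_down_symm u))))
    · exact Or.inr (Or.inr (Or.inl (Or.inr (Or.inr u))))
    · exact Or.inr (Or.inr (Or.inl (Or.inr (Or.inl u))))
  · refine Or.inr (Or.inr (Or.inr ?_))
    rcases h with t | t | t | t | t | t
    · exact Or.inr (Or.inr (Or.inl t))
    · exact Or.inr (Or.inr (Or.inr (Or.inl t)))
    · exact Or.inl t
    · exact Or.inr (Or.inl t)
    · exact Or.inr (Or.inr (Or.inr (Or.inr (Or.inr t))))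
    · exact Or.inr (Or.inr (Or.inr (Or.inr (Or.inl t))))

private lemma tdt_swap23 {A : V → V → Prop} {i j k : V} (h : TdtQuad A i j k) :
    TdtQuad A i k j := by
  rcases h with h | h | h | h
  · exact Or.inl ⟨h.2.2, tdt_mut_symm h.2.1, h.1⟩
  · rcases h with u | u | u
    · exact Or.inr (Or.inl (Or.inr (Or.inl u)))
    · exact Or.inr (Or.inl (Or.inl u))
    · exact Or.inr (Or.inl (Or.inr (Or.inr (tdt_up_symm u))))
  · rcases h with u | u | u
    · exact Or.inr (Or.inr (Or.inl (Or.inr (Or.inl u))))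
    · exact Or.inr (Or.inr (Or.inl (Or.inl u)))
    · exact Or.inr (Or.inr (Or.inl (Or.inr (Or.inr (tdt_down_symm u)))))
  · refine Or.inr (Or.inr (Or.inr ?_))
    rcases h with t | t | t | t | t | t
    · exact Or.inr (Or.inl t)
    · exact Or.inl t
    · exact Or.inr (Or.inr (Or.inr (Or.inr (Or.inl t))))
    · exact Or.inr (Or.inr (Or.inr (Or.inr (Or.inr t))))
    · exact Or.inr (Or.inr (Or.inl t))
    · exact Or.inr (Or.inr (Or.inr (Or.inl t)))

private lemma tdt_sorted (c : V → Fin 3) {x y z : V} (hxy : x ≠ y) (hxz : x ≠ z)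
    (hyz : y ≠ z) (h1 : (c x : ℕ) ≤ c y) (h2 : (c y : ℕ) ≤ c z) :
    TdtQuad (TransDiagAdj c) x y z := by
  rcases h1.lt_or_eq with h1 | h1 <;> rcases h2.lt_or_eq with h2 | h2
  · exact Or.inr (Or.inr (Or.inr (Or.inl ⟨tdt_arc c hxy h1.le, tdt_arc c hyz h2.le,
      tdt_arc c hxz (h1.le.trans h2.le), tdt_narc c h1, tdt_narc c h2,
      tdt_narc c (h1.trans h2)⟩)))
  · exact Or.inr (Or.inr (Or.inl (Or.inr (Or.inr ⟨tdt_mut c hyz h2,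
      tdt_arc c hxy h1.le, tdt_arc c hxz (by omega), tdt_narc c h1,
      tdt_narc c (by omega)⟩))))
  · exact Or.inr (Or.inl (Or.inl ⟨tdt_mut c hxy h1, tdt_arc c hxz (by omega),
      tdt_arc c hyz h2.le, tdt_narc c (by omega), tdt_narc c h2⟩))
  · exact Or.inl ⟨tdt_mut c hxy h1, tdt_mut c hyz h2, tdt_mut c hxz (by omega)⟩

private lemma tdt_classify (c : V → Fin 3) {i j k : V} (hij : i ≠ j) (hik : i ≠ k)
    (hjk : j ≠ k) : TdtQuad (TransDiagAdj c) i j k := by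
  rcases le_total ((c i : ℕ)) (c j) with h1 | h1
  · rcases le_total ((c j : ℕ)) (c k) with h2 | h2
    · exact tdt_sorted c hij hik hjk h1 h2
    · rcases le_total ((c i : ℕ)) (c k) with h3 | h3
      · exact tdt_swap23 (tdt_sorted c hik hij hjk.symm h3 h2)
      · exact tdt_swap23 (tdt_swap12 (tdt_sorted c hik.symm hjk.symm hij h3 h1))
  · rcases le_total ((c i : ℕ)) (c k) with h2 | h2
    · exact tdt_swap12 (tdt_sorted c hij.symm hjk hik h1 h2)
    · rcases le_total ((c j : ℕ)) (c k) with h3 | h3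
      · exact tdt_swap12 (tdt_swap23 (tdt_sorted c hjk hij.symm hik.symm h3 h2))
      · exact tdt_swap12 (tdt_swap23 (tdt_swap12
          (tdt_sorted c hjk.symm hik.symm hij.symm h3 h1)))


/-- The ideal transitivity network with complete diagonal blocks is semicomplete (no dyad
is null), every triad is of type 300, 120U, 120D or 030T, and if every level has at least
3 vertices then all four types occur. -/
theorem transDiag_triads {V : Type*} [Fintype V] [DecidableEq V] (c : V → Fin 3) :
    (∀ i j : V, i ≠ j → (TransDiagAdj c i j ∨ TransDiagAdj c j i)) ∧
    (∀ i j : V, i ≠ j → ¬ NullDyad (TransDiagAdj c) i j) ∧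
    (∀ i j k : V, i ≠ j → i ≠ k → j ≠ k →
        Triad300 (TransDiagAdj c) i j k ∨ Triad120U (TransDiagAdj c) i j k ∨
          Triad120D (TransDiagAdj c) i j k ∨ Triad030T (TransDiagAdj c) i j k) ∧
    ((∀ t : Fin 3, 3 ≤ (Finset.univ.filter fun v => c v = t).card) →
        (∃ i j k : V, i ≠ j ∧ i ≠ k ∧ j ≠ k ∧ Triad300 (TransDiagAdj c) i j k) ∧
        (∃ i j k : V, i ≠ j ∧ i ≠ k ∧ j ≠ k ∧ Triad120U (TransDiagAdj c) i j k) ∧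
        (∃ i j k : V, i ≠ j ∧ i ≠ k ∧ j ≠ k ∧ Triad120D (TransDiagAdj c) i j k) ∧
        (∃ i j k : V, i ≠ j ∧ i ≠ k ∧ j ≠ k ∧ Triad030T (TransDiagAdj c) i j k)) := by
  have semi : ∀ i j : V, i ≠ j → (TransDiagAdj c i j ∨ TransDiagAdj c j i) := by
    intro i j h
    rcases le_total ((c i : ℕ)) (c j) with hle | hle
    · exact Or.inl ⟨h, hle⟩
    · exact Or.inr ⟨h.symm, hle⟩
  refine ⟨semi, ?_, ?_, ?_⟩
  · intro i j h hn
    rcases semi i j h with ha | ha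
    · exact hn.1 ha
    · exact hn.2 ha
  · intro i j k hij hik hjk
    exact tdt_classify c hij hik hjk
  · intro hcard
    have get3 : ∀ t : Fin 3, ∃ a b d : V, c a = t ∧ c b = t ∧ c d = t ∧
        a ≠ b ∧ a ≠ d ∧ b ≠ d := by
      intro t
      obtain ⟨a, ha, b, hb, d, hd, h⟩ := tdt_ex3 (hcard t)
      exact ⟨a, b, d, (Finset.mem_filter.mp ha).2, (Finset.mem_filter.mp hb).2,
        (Finset.mem_filter.mp hd).2, h⟩
    obtain ⟨a0, b0, d0, ha0, hb0, hd0, hab0, had0, hbd0⟩ := get3 0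
    obtain ⟨a1, b1, d1, ha1, hb1, hd1, hab1, had1, hbd1⟩ := get3 1
    obtain ⟨a2, b2, d2, ha2, hb2, hd2, hab2, had2, hbd2⟩ := get3 2
    have v0 : (c a0 : ℕ) = 0 := by rw [ha0]; rfl
    have w0 : (c b0 : ℕ) = 0 := by rw [hb0]; rfl
    have u0 : (c d0 : ℕ) = 0 := by rw [hd0]; rfl
    have v1 : (c a1 : ℕ) = 1 := by rw [ha1]; rfl
    have w1 : (c b1 : ℕ) = 1 := by rw [hb1]; rfl
    have v2 : (c a2 : ℕ) = 2 := by rw [ha2]; rfl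
    have ne01 : ∀ {x y : V}, (c x : ℕ) = 0 → (c y : ℕ) = 1 → x ≠ y := by
      intro x y hx hy e; rw [e, hy] at hx; omega
    have ne02 : ∀ {x y : V}, (c x : ℕ) = 0 → (c y : ℕ) = 2 → x ≠ y := by
      intro x y hx hy e; rw [e, hy] at hx; omega
    have ne12 : ∀ {x y : V}, (c x : ℕ) = 1 → (c y : ℕ) = 2 → x ≠ y := by
      intro x y hx hy e; rw [e, hy] at hx; omega
    refine ⟨⟨a0, b0, d0, hab0, had0, hbd0, tdt_mut c hab0 (by omega),
        tdt_mut c hbd0 (by omega), tdt_mut c had0 (by omega)⟩, ?_, ?_, ?_⟩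
    · exact ⟨a0, b0, a1, hab0, ne01 v0 v1, ne01 w0 v1,
        Or.inl ⟨tdt_mut c hab0 (by omega), tdt_arc c (ne01 v0 v1) (by omega),
          tdt_arc c (ne01 w0 v1) (by omega), tdt_narc c (by omega),
          tdt_narc c (by omega)⟩⟩
    · exact ⟨a1, b1, a0, hab1, (ne01 v0 v1).symm, (ne01 v0 w1).symm,
        Or.inl ⟨tdt_mut c hab1 (by omega), tdt_arc c (ne01 v0 v1) (by omega),
          tdt_arc c (ne01 v0 w1) (by omega), tdt_narc c (by omega),
          tdt_narc c (by omega)⟩⟩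
    · exact ⟨a0, a1, a2, ne01 v0 v1, ne02 v0 v2, ne12 v1 v2,
        Or.inl ⟨tdt_arc c (ne01 v0 v1) (by omega), tdt_arc c (ne12 v1 v2) (by omega),
          tdt_arc c (ne02 v0 v2) (by omega), tdt_narc c (by omega),
          tdt_narc c (by omega), tdt_narc c (by omega)⟩⟩
end
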